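/- arXiv:2302.07743 — 5 statements merged into one kernel-verified Lean document; each statement's English description precedes it below -/
import Mathlib

section
/- Let D be a domain in ℂ and let u : D → [0,∞) be an inf-harmonic function (i.e., the pointwise infimum of a nonempty family of nonnegative harmonic functions on D). If u is not identically zero, then u(λ) > 0 for all λ ∈ D, and for all λ₁, λ₂ ∈ D one has 1/τ_D(λ₁,λ₂) ≤ u(λ₁)/u(λ₂) ≤ τ_D(λ₁,λ₂), where τ_D(λ₁,λ₂) is the Harnack distance, i.e., the smallest constant τ such that 1/τ ≤ h(λ₁)/h(λ₂) ≤ τ for all positive harmonic functions h on D. -/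
/-!
Every member of the family is a nonnegative harmonic majorant of `u`, and any multiplicative bound
`h λ₁ ≤ τ h λ₂` shared by all of them passes to the infimum. On a disc the Poisson formula gives
Harnack's inequality, hence the uniform constant `3` near each point for all nonnegative harmonic
functions on `D`; chaining by connectedness gives a finite constant between any two points. This
yields `u > 0` from `u ≠ 0` at one point, makes the set defining `τ_D` nonempty, and every
admissible `τ` then bounds `u λ₁ / u λ₂` and its inverse.
-/

open Complex Metric Set Filter
open scoped ENNReal

/-- A real-valued function is harmonic on `D` if near each point of `D`
it is the real part of a holomorphic function. -/
def HarmonicOnSet (f : ℂ → ℝ) (D : Set ℂ) : Prop :=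
  ∀ z ∈ D, ∃ ε > 0, Metric.ball z ε ⊆ D ∧
    ∃ F : ℂ → ℂ, DifferentiableOn ℂ F (Metric.ball z ε) ∧
      ∀ w ∈ Metric.ball z ε, f w = (F w).re

/-- `u` is inf-harmonic on `D`: the pointwise infimum of a nonempty family of
nonnegative harmonic functions on `D`. -/
def InfHarmonicOn (u : ℂ → ℝ) (D : Set ℂ) : Prop :=
  ∃ H : Set (ℂ → ℝ), H.Nonempty ∧
    (∀ h ∈ H, HarmonicOnSet h D) ∧
    (∀ h ∈ H, ∀ z ∈ D, 0 ≤ h z) ∧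
    (∀ z ∈ D, u z = sInf ((fun h => h z) '' H))


/-- The Harnack distance of `D` at `z₁, z₂`: the smallest `τ > 0` such that every
positive harmonic function `h` on `D` satisfies `1/τ ≤ h z₁ / h z₂ ≤ τ`. -/
noncomputable def harnackDist (D : Set ℂ) (z₁ z₂ : ℂ) : ℝ :=
  sInf {τ : ℝ | 0 < τ ∧ ∀ h : ℂ → ℝ, HarmonicOnSet h D → (∀ z ∈ D, 0 < h z) →
    1 / τ ≤ h z₁ / h z₂ ∧ h z₁ / h z₂ ≤ τ}


open InnerProductSpace Real Topology

theorem HarmonicOnSet.harmonicOnNhd {f : ℂ → ℝ} {D : Set ℂ} (hf : HarmonicOnSet f D) :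
    HarmonicOnNhd f D := by
  intro z hz
  obtain ⟨ε, hε, -, F, hF, hre⟩ := hf z hz
  have hball : ball z ε ∈ 𝓝 z := ball_mem_nhds z hε
  refine (harmonicAt_congr_nhds ?_).1 (hF.analyticAt hball).harmonicAt_re
  filter_upwards [hball] with w hw using (hre w hw).symm

/-- The Poisson kernel at `w` lies between `(R - |w - c|) / (R + |w - c|)` and its inverse on the
circle; compare the Poisson formula for `f w` with the mean value formula for `f c`. -/
theorem InnerProductSpace.HarmonicOnNhd.harnack_ineq_ball {f : ℂ → ℝ} {c w : ℂ} {R : ℝ}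
    (hf : HarmonicOnNhd f (closedBall c R)) (hf₀ : ∀ z ∈ sphere c R, 0 ≤ f z)
    (hw : w ∈ ball c R) :
    (R - ‖w - c‖) / (R + ‖w - c‖) * f c ≤ f w ∧
      f w ≤ (R + ‖w - c‖) / (R - ‖w - c‖) * f c := by
  have hR : 0 < R := pos_of_mem_ball hw
  have hmean : circleAverage f c R = f c := by
    rw [← abs_of_pos hR] at hf
    exact hf.circleAverage_eq
  have hpoisson := hf.circleAverage_poissonKernel_smul hw
  have hkernel : ∀ z ∈ sphere c R, poissonKernel c w z =
      ((z - c + (w - c)) / ((z - c) - (w - c))).re := fun z _ => by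
    rw [poissonKernel_eq_re_herglotzRieszKernel, Function.comp_apply, herglotzRieszKernel_def]
  have hfi : CircleIntegrable f c R :=
    (hf.continuousOn.mono sphere_subset_closedBall).circleIntegrable hR.le
  have hPi : CircleIntegrable (poissonKernel c w • f) c R := by
    refine ContinuousOn.circleIntegrable' (ContinuousOn.smul ?_ (hf.continuousOn.mono ?_))
    · rw [poissonKernel_eq_re_herglotzRieszKernel]
      exact continuous_re.comp_continuousOn (continuousOn_herglotzRieszKernel_sphere hw)
    · rw [abs_of_pos hR]
      exact sphere_subset_closedBall
  constructor
  · rw [← hmean, ← hpoisson, ← smul_eq_mul, ← circleAverage_smul]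
    refine circleAverage_mono hfi.const_smul hPi fun z hz => ?_
    rw [abs_of_pos hR] at hz
    show _ * f z ≤ poissonKernel c w z * f z
    rw [hkernel z hz]
    exact mul_le_mul_of_nonneg_right (le_re_herglotzRieszKernel hz hw) (hf₀ z hz)
  · rw [← hmean, ← hpoisson, ← smul_eq_mul, ← circleAverage_smul]
    refine circleAverage_mono hPi hfi.const_smul fun z hz => ?_
    rw [abs_of_pos hR] at hz
    show poissonKernel c w z * f z ≤ _ * f z
    rw [hkernel z hz]
    exact mul_le_mul_of_nonneg_right (re_herglotzRieszKernel_le hz hw) (hf₀ z hz)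

theorem IsOpen.eventually_forall_harmonicOnNhd_le_three_mul {D : Set ℂ} (hD : IsOpen D) {x : ℂ}
    (hx : x ∈ D) :
    ∀ᶠ y in 𝓝 x, ∀ f : ℂ → ℝ, HarmonicOnNhd f D → (∀ z ∈ D, 0 ≤ f z) →
      f y ≤ 3 * f x ∧ f x ≤ 3 * f y := by
  obtain ⟨R, hR, hsub⟩ := nhds_basis_closedBall.mem_iff.1 (hD.mem_nhds hx)
  filter_upwards [ball_mem_nhds x (half_pos hR)] with y hy f hf hf₀
  have hr : ‖y - x‖ < R / 2 := mem_ball_iff_norm.1 hy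
  have hr₀ : 0 ≤ ‖y - x‖ := norm_nonneg _
  obtain ⟨hlow, hupp⟩ := (hf.mono hsub).harnack_ineq_ball
    (fun z hz => hf₀ z (hsub (sphere_subset_closedBall hz)))
    (ball_subset_ball (half_le_self hR.le) hy)
  have hfx := hf₀ x hx
  have hlow' : 1 / 3 ≤ (R - ‖y - x‖) / (R + ‖y - x‖) := by
    rw [div_le_div_iff₀ (by norm_num) (by linarith)]; linarith
  have hupp' : (R + ‖y - x‖) / (R - ‖y - x‖) ≤ 3 := by
    rw [div_le_iff₀ (by linarith)]; linarith
  constructor <;> nlinarith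

def HarnackBounded (D : Set ℂ) (a b : ℂ) : Prop :=
  ∃ τ > 0, ∀ f : ℂ → ℝ, HarmonicOnNhd f D → (∀ z ∈ D, 0 ≤ f z) → f a ≤ τ * f b

theorem HarnackBounded.trans {D : Set ℂ} {a b c : ℂ} (hab : HarnackBounded D a b)
    (hbc : HarnackBounded D b c) : HarnackBounded D a c := by
  obtain ⟨τ₁, hτ₁, h₁⟩ := hab
  obtain ⟨τ₂, hτ₂, h₂⟩ := hbc
  refine ⟨τ₁ * τ₂, mul_pos hτ₁ hτ₂, fun f hf hf₀ => ?_⟩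
  calc f a ≤ τ₁ * f b := h₁ f hf hf₀
    _ ≤ τ₁ * (τ₂ * f c) := mul_le_mul_of_nonneg_left (h₂ f hf hf₀) hτ₁.le
    _ = τ₁ * τ₂ * f c := (mul_assoc _ _ _).symm

/-- A transitive relation holding near every point of a connected set holds on all of it. -/
theorem IsPreconnected.harnackBounded {D : Set ℂ} (hD : IsOpen D) (hDc : IsPreconnected D)
    {a b : ℂ} (ha : a ∈ D) (hb : b ∈ D) : HarnackBounded D a b := by
  refine hDc.induction₂' (HarnackBounded D) (fun x hx => ?_)
    (fun _ _ _ _ _ _ => HarnackBounded.trans) ha hb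
  filter_upwards [nhdsWithin_le_nhds (hD.eventually_forall_harmonicOnNhd_le_three_mul hx)]
    with y hy
  exact ⟨⟨3, by norm_num, fun f hf hf₀ => (hy f hf hf₀).2⟩,
    ⟨3, by norm_num, fun f hf hf₀ => (hy f hf hf₀).1⟩⟩

theorem csInf_image_le_mul_csInf_image {ι : Type*} {s : Set ι} {f g : ι → ℝ} {τ : ℝ}
    (hs : s.Nonempty) (hf : BddBelow (f '' s)) (hτ : 0 < τ) (h : ∀ i ∈ s, f i ≤ τ * g i) :
    sInf (f '' s) ≤ τ * sInf (g '' s) := by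
  rw [← div_le_iff₀' hτ]
  refine le_csInf (hs.image g) ?_
  rintro _ ⟨i, hi, rfl⟩
  rw [div_le_iff₀' hτ]
  exact (csInf_le hf (mem_image_of_mem f hi)).trans (h i hi)

namespace InfHarmonicOn

variable {u : ℂ → ℝ} {D : Set ℂ}

theorem nonneg (hu : InfHarmonicOn u D) {z : ℂ} (hz : z ∈ D) : 0 ≤ u z := by
  obtain ⟨H, hHne, -, hH₀, hHu⟩ := hu
  rw [hHu z hz]
  refine le_csInf (hHne.image _) ?_
  rintro _ ⟨h, hh, rfl⟩
  exact hH₀ h hh z hz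

theorem le_mul (hu : InfHarmonicOn u D) {a b : ℂ} (ha : a ∈ D) (hb : b ∈ D) {τ : ℝ}
    (hτ : 0 < τ) (h : ∀ f : ℂ → ℝ, HarmonicOnSet f D → (∀ z ∈ D, 0 ≤ f z) →
      (∀ z ∈ D, u z ≤ f z) → f a ≤ τ * f b) :
    u a ≤ τ * u b := by
  obtain ⟨H, hHne, hHharm, hH₀, hHu⟩ := hu
  have hbdd : ∀ z ∈ D, BddBelow ((fun h => h z) '' H) := by
    intro z hz
    refine ⟨0, ?_⟩
    rintro _ ⟨h, hh, rfl⟩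
    exact hH₀ h hh z hz
  have hle : ∀ h ∈ H, ∀ z ∈ D, u z ≤ h z := fun h hh z hz => by
    rw [hHu z hz]
    exact csInf_le (hbdd z hz) (mem_image_of_mem _ hh)
  rw [hHu a ha, hHu b hb]
  exact csInf_image_le_mul_csInf_image hHne (hbdd a ha) hτ fun f hf =>
    h f (hHharm f hf) (hH₀ f hf) (hle f hf)

theorem pos (hD : IsOpen D) (hDc : IsPreconnected D) (hu : InfHarmonicOn u D)
    (hne : ∃ z ∈ D, u z ≠ 0) {z : ℂ} (hz : z ∈ D) : 0 < u z := by
  obtain ⟨z₀, hz₀, hu₀⟩ := hne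
  obtain ⟨τ, hτ, hbound⟩ := hDc.harnackBounded hD hz₀ hz
  have hle : u z₀ ≤ τ * u z :=
    hu.le_mul hz₀ hz hτ fun f hf hf₀ _ => hbound f hf.harmonicOnNhd hf₀
  have hpos₀ : 0 < u z₀ := (hu.nonneg hz₀).lt_of_ne' hu₀
  exact pos_of_mul_pos_right (hpos₀.trans_le hle) hτ.le

end InfHarmonicOn

theorem le_harnackDist {D : Set ℂ} (hD : IsOpen D) (hDc : IsPreconnected D) {z₁ z₂ : ℂ}
    (h₁ : z₁ ∈ D) (h₂ : z₂ ∈ D) {r : ℝ}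
    (h : ∀ τ > 0, (∀ f : ℂ → ℝ, HarmonicOnSet f D → (∀ z ∈ D, 0 < f z) →
      f z₁ ≤ τ * f z₂ ∧ f z₂ ≤ τ * f z₁) → r ≤ τ) :
    r ≤ harnackDist D z₁ z₂ := by
  obtain ⟨τ₁, hτ₁, hb₁⟩ := hDc.harnackBounded hD h₁ h₂
  obtain ⟨τ₂, hτ₂, hb₂⟩ := hDc.harnackBounded hD h₂ h₁
  have hratio : ∀ {τ : ℝ} {f : ℂ → ℝ}, 0 < τ → (∀ z ∈ D, 0 < f z) →
      ((1 / τ ≤ f z₁ / f z₂ ∧ f z₁ / f z₂ ≤ τ) ↔ (f z₁ ≤ τ * f z₂ ∧ f z₂ ≤ τ * f z₁)) :=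
    fun hτ hf => by
      rw [div_le_div_iff₀ hτ (hf z₂ h₂), one_mul, div_le_iff₀ (hf z₂ h₂), mul_comm, and_comm]
  refine le_csInf ⟨max τ₁ τ₂, lt_max_of_lt_left hτ₁, fun f hf hf₀ => ?_⟩ ?_
  · rw [hratio (lt_max_of_lt_left hτ₁) hf₀]
    have hf₀' : ∀ z ∈ D, 0 ≤ f z := fun z hz => (hf₀ z hz).le
    exact ⟨(hb₁ f hf.harmonicOnNhd hf₀').trans
        (mul_le_mul_of_nonneg_right (le_max_left _ _) (hf₀' z₂ h₂)),
      (hb₂ f hf.harmonicOnNhd hf₀').trans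
        (mul_le_mul_of_nonneg_right (le_max_right _ _) (hf₀' z₁ h₁))⟩
  · rintro τ ⟨hτ, hbound⟩
    exact h τ hτ fun f hf hf₀ => (hratio hτ hf₀).1 (hbound f hf hf₀)

theorem harnack_ineq_infHarmonic (D : Set ℂ) (hD : IsOpen D) (hDc : IsConnected D)
    (u : ℂ → ℝ) (hu : InfHarmonicOn u D) (hne : ∃ z ∈ D, u z ≠ 0) :
    (∀ z ∈ D, 0 < u z) ∧
    ∀ l₁ ∈ D, ∀ l₂ ∈ D,
      1 / harnackDist D l₁ l₂ ≤ u l₁ / u l₂ ∧ u l₁ / u l₂ ≤ harnackDist D l₁ l₂ := by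
  have hpos : ∀ z ∈ D, 0 < u z := fun z hz => hu.pos hD hDc.isPreconnected hne hz
  refine ⟨hpos, fun l₁ h₁ l₂ h₂ => ?_⟩
  have hmajorant : ∀ {f : ℂ → ℝ}, (∀ z ∈ D, u z ≤ f z) → ∀ z ∈ D, 0 < f z :=
    fun hfu z hz => (hpos z hz).trans_le (hfu z hz)
  have hupper : u l₁ / u l₂ ≤ harnackDist D l₁ l₂ :=
    le_harnackDist hD hDc.isPreconnected h₁ h₂ fun τ hτ hbound => by
      rw [div_le_iff₀ (hpos l₂ h₂)]
      exact hu.le_mul h₁ h₂ hτ fun f hf _ hfu => (hbound f hf (hmajorant hfu)).1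
  have hlower : u l₂ / u l₁ ≤ harnackDist D l₁ l₂ :=
    le_harnackDist hD hDc.isPreconnected h₁ h₂ fun τ hτ hbound => by
      rw [div_le_iff₀ (hpos l₁ h₁)]
      exact hu.le_mul h₂ h₁ hτ fun f hf _ hfu => (hbound f hf (hmajorant hfu)).2
  have hdist : 0 < harnackDist D l₁ l₂ := (div_pos (hpos l₂ h₂) (hpos l₁ h₁)).trans_le hlower
  refine ⟨?_, hupper⟩
  rwa [one_div_le hdist (div_pos (hpos l₁ h₁) (hpos l₂ h₂)), one_div_div]
end

section
/- Let (u_n)_{n≥1} be inf-harmonic functions on a plane domain D converging pointwise to a function u : D → [0,∞]. Then either u ≡ ∞ on D, or u is finite everywhere and inf-harmonic on D. -/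
open Complex Metric Set Filter
open scoped ENNReal

/-!
Harnack's inequality, read off from the Poisson integral formula, passes to infima and to limits,
so `{u = ∞}` is open and closed in `D`. If `u` is finite, fix `z₀` and pick harmonic majorants
`g n` of `u n` with `g n z₀ ≤ u n z₀ + 1 / (n + 1)`. By Harnack these are locally bounded and
equicontinuous, so a subsequence converges locally uniformly; by Borel–Carathéodory the limit is
again the real part of a holomorphic function, i.e. a harmonic majorant of `u` touching it at `z₀`.
-/

open scoped Topology
open InnerProductSpace

theorem IsPreconnected.iff_of_eventually_iff {α : Type*} [TopologicalSpace α] {s : Set α}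
    (hs : IsPreconnected s) {P : α → Prop} (hP : ∀ x ∈ s, ∀ᶠ y in 𝓝[s] x, P x ↔ P y)
    {x y : α} (hx : x ∈ s) (hy : y ∈ s) : P x ↔ P y :=
  hs.induction₂ (fun a b => P a ↔ P b) hP (fun _ _ _ _ _ _ => Iff.trans)
    (fun _ _ _ _ => Iff.symm) hx hy

theorem EquicontinuousAt.cauchySeq_of_mem_closure {ι X α : Type*} [Nonempty ι]
    [SemilatticeSup ι] [TopologicalSpace X] [PseudoMetricSpace α] {F : ι → X → α} {S : Set X}
    {x : X} (hF : EquicontinuousAt F x) (hx : x ∈ closure S)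
    (hS : ∀ y ∈ S, CauchySeq fun i => F i y) :
    CauchySeq fun i => F i x := by
  rw [Metric.cauchySeq_iff]
  intro ε hε
  obtain ⟨y, hxy, hyS⟩ :=
    mem_closure_iff_nhds.1 hx _ (Metric.equicontinuousAt_iff_right.1 hF (ε / 3) (by positivity))
  obtain ⟨N, hN⟩ := Metric.cauchySeq_iff.1 (hS y hyS) (ε / 3) (by positivity)
  refine ⟨N, fun m hm n hn => ?_⟩
  calc dist (F m x) (F n x) ≤ dist (F m x) (F m y) + dist (F m y) (F n y) + dist (F n y) (F n x) :=
        dist_triangle4 _ _ _ _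
    _ < ε := by linarith [hxy m, hN m hm n hn, dist_comm (F n y) (F n x), hxy n]

theorem tendstoLocallyUniformlyOn_of_equicontinuousAt {ι X α : Type*} [TopologicalSpace X]
    [PseudoMetricSpace α] {F : ι → X → α} {f : X → α} {l : Filter ι} [l.NeBot] {s : Set X}
    (hF : ∀ x ∈ s, EquicontinuousAt F x) (hFf : ∀ x ∈ s, Tendsto (F · x) l (𝓝 (f x))) :
    TendstoLocallyUniformlyOn F f l s := by
  rw [Metric.tendstoLocallyUniformlyOn_iff]
  intro ε hε x hx
  have hU := Metric.equicontinuousAt_iff_right.1 (hF x hx) (ε / 3) (by positivity)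
  refine ⟨_, inter_mem_nhdsWithin s hU, ?_⟩
  filter_upwards [Metric.tendsto_nhds.1 (hFf x hx) (ε / 3) (by positivity)] with n hn y hy
  obtain ⟨hys, hxy⟩ := hy
  have hf : dist (f x) (f y) ≤ ε / 3 :=
    le_of_tendsto ((hFf x hx).dist (hFf y hys)) (Eventually.of_forall fun i => (hxy i).le)
  calc dist (f y) (F n y) ≤ dist (f y) (f x) + dist (f x) (F n x) + dist (F n x) (F n y) :=
        dist_triangle4 _ _ _ _
    _ < ε := by linarith [dist_comm (f y) (f x), dist_comm (F n x) (f x), hxy n]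

theorem harmonicOnSet_iff_harmonicOnNhd {f : ℂ → ℝ} {D : Set ℂ} (hD : IsOpen D) :
    HarmonicOnSet f D ↔ HarmonicOnNhd f D := by
  constructor
  · intro hf z hz
    obtain ⟨ε, hε, -, F, hF, hfF⟩ := hf z hz
    have hball : ball z ε ∈ 𝓝 z := ball_mem_nhds z hε
    refine (harmonicAt_congr_nhds ?_).2 (hF.analyticAt hball).harmonicAt_re
    filter_upwards [hball] with w hw using hfF w hw
  · intro hf z hz
    obtain ⟨ε, hε, hεD⟩ := Metric.isOpen_iff.1 hD z hz
    obtain ⟨F, hF, hfF⟩ := (hf.mono hεD).exists_analyticOnNhd_ball_re_eq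
    exact ⟨ε, hε, hεD, F, hF.differentiableOn, fun w hw => (hfF hw).symm⟩

theorem poissonKernel_le {c w z : ℂ} {R : ℝ} (hz : z ∈ sphere c R) (hw : w ∈ ball c R) :
    poissonKernel c w z ≤ (R + dist w c) / (R - dist w c) := by
  rw [poissonKernel_eq_re_herglotzRieszKernel, Function.comp_apply, herglotzRieszKernel_def,
    dist_eq_norm]
  exact re_herglotzRieszKernel_le hz hw

theorem le_poissonKernel {c w z : ℂ} {R : ℝ} (hz : z ∈ sphere c R) (hw : w ∈ ball c R) :
    (R - dist w c) / (R + dist w c) ≤ poissonKernel c w z := by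
  rw [poissonKernel_eq_re_herglotzRieszKernel, Function.comp_apply, herglotzRieszKernel_def,
    dist_eq_norm]
  exact le_re_herglotzRieszKernel hz hw

theorem continuousOn_poissonKernel_sphere {c w : ℂ} {R : ℝ} (hw : w ∈ ball c R) :
    ContinuousOn (poissonKernel c w) (sphere c |R|) := by
  rw [poissonKernel_eq_re_herglotzRieszKernel]
  exact continuous_re.comp_continuousOn (continuousOn_herglotzRieszKernel_sphere hw)

theorem InnerProductSpace.HarmonicOnNhd.harnack {f : ℂ → ℝ} {c w : ℂ} {R : ℝ}
    (hf : HarmonicOnNhd f (closedBall c R)) (hf0 : ∀ z ∈ sphere c R, 0 ≤ f z)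
    (hw : w ∈ ball c R) :
    (R - dist w c) / (R + dist w c) * f c ≤ f w ∧
      f w ≤ (R + dist w c) / (R - dist w c) * f c := by
  have hR : |R| = R := abs_of_pos (pos_of_mem_ball hw)
  have hf' : HarmonicOnNhd f (closedBall c |R|) := by rwa [hR]
  have hfc : ContinuousOn f (sphere c |R|) := hf'.continuousOn.mono sphere_subset_closedBall
  have hint : CircleIntegrable (poissonKernel c w • f) c R :=
    ((continuousOn_poissonKernel_sphere hw).smul hfc).circleIntegrable'
  have hint' : ∀ a : ℝ, CircleIntegrable (a • f) c R := fun a =>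
    (continuousOn_const.smul hfc).circleIntegrable'
  rw [← hf.circleAverage_poissonKernel_smul hw, ← hf'.circleAverage_eq, ← smul_eq_mul,
    ← smul_eq_mul, ← Real.circleAverage_smul, ← Real.circleAverage_smul]
  constructor
  · refine Real.circleAverage_mono (hint' _) hint fun z hz => ?_
    rw [hR] at hz
    exact mul_le_mul_of_nonneg_right (le_poissonKernel hz hw) (hf0 z hz)
  · refine Real.circleAverage_mono hint (hint' _) fun z hz => ?_
    rw [hR] at hz
    exact mul_le_mul_of_nonneg_right (poissonKernel_le hz hw) (hf0 z hz)

theorem InnerProductSpace.HarmonicOnNhd.le_three_mul {f : ℂ → ℝ} {c w : ℂ} {R : ℝ}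
    (hf : HarmonicOnNhd f (closedBall c R)) (hf0 : ∀ z ∈ closedBall c R, 0 ≤ f z)
    (hR : 0 < R) (hw : dist w c ≤ R / 2) :
    f w ≤ 3 * f c ∧ f c ≤ 3 * f w := by
  have hfc := hf0 c (mem_closedBall_self hR.le)
  obtain ⟨hlow, hup⟩ :=
    hf.harnack (fun z hz => hf0 z (sphere_subset_closedBall hz)) (mem_ball.2 (by linarith))
  have hr := dist_nonneg (x := w) (y := c)
  constructor
  · calc f w ≤ (R + dist w c) / (R - dist w c) * f c := hup
      _ ≤ 3 * f c := by
        gcongr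
        rw [div_le_iff₀ (by linarith)]
        linarith
  · calc f c ≤ 3 * ((R - dist w c) / (R + dist w c)) * f c := by
          refine le_mul_of_one_le_left hfc ?_
          rw [← mul_div_assoc, le_div_iff₀ (by linarith)]
          linarith
      _ ≤ 3 * f w := by rw [mul_assoc]; gcongr

theorem InnerProductSpace.HarmonicOnNhd.abs_sub_le {f : ℂ → ℝ} {c w : ℂ} {R : ℝ}
    (hf : HarmonicOnNhd f (closedBall c R)) (hf0 : ∀ z ∈ closedBall c R, 0 ≤ f z)
    (hw : w ∈ ball c R) :
    |f w - f c| ≤ 2 * dist w c / (R - dist w c) * f c := by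
  have hfc := hf0 c (mem_closedBall_self (pos_of_mem_ball hw).le)
  obtain ⟨hlow, hup⟩ := hf.harnack (fun z hz => hf0 z (sphere_subset_closedBall hz)) hw
  have hr := dist_nonneg (x := w) (y := c)
  have hpos : 0 < R - dist w c := sub_pos.2 hw
  have hpos' : 0 < R + dist w c := by linarith
  rw [abs_le]
  constructor
  · have : (R - dist w c) / (R + dist w c) = 1 - 2 * dist w c / (R + dist w c) := by
      field_simp; ring
    have h2 : 2 * dist w c / (R + dist w c) ≤ 2 * dist w c / (R - dist w c) := by
      gcongr; linarith
    nlinarith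
  · have : (R + dist w c) / (R - dist w c) = 1 + 2 * dist w c / (R - dist w c) := by
      field_simp; ring
    nlinarith

theorem Complex.norm_le_of_forall_re_le {F : ℂ → ℂ} {c w : ℂ} {R M : ℝ} (hM : 0 < M)
    (hF : DifferentiableOn ℂ F (ball c R)) (hre : ∀ z ∈ ball c R, (F z).re ≤ M)
    (hR : 0 < R) (hw : dist w c ≤ R / 2) :
    ‖F w‖ ≤ 2 * M + 3 * ‖F c‖ := by
  have hG : DifferentiableOn ℂ (fun z => F (c + z)) (ball 0 R) :=
    hF.comp (differentiableOn_const c |>.add differentiableOn_id) fun z hz => by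
      simpa [mem_ball, dist_eq_norm] using hz
  have hmaps : MapsTo (fun z => F (c + z)) (ball 0 R) {z | z.re ≤ M} := fun z hz =>
    hre _ (by simpa [mem_ball, dist_eq_norm] using hz)
  have ht : ‖w - c‖ ≤ R / 2 := by rwa [← dist_eq_norm]
  have hbc := borelCaratheodory hM hG hmaps hR (z := w - c)
    (by simpa using ht.trans_lt (by linarith))
  simp only [add_sub_cancel, add_zero] at hbc
  have ht0 := norm_nonneg (w - c)
  have hpos : 0 < R - ‖w - c‖ := by linarith
  have h1 : ‖w - c‖ / (R - ‖w - c‖) ≤ 1 := by rw [div_le_one hpos]; linarith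
  have h3 : (R + ‖w - c‖) / (R - ‖w - c‖) ≤ 3 := by rw [div_le_iff₀ hpos]; linarith
  calc ‖F w‖ ≤ 2 * M * ‖w - c‖ / (R - ‖w - c‖) + ‖F c‖ * (R + ‖w - c‖) / (R - ‖w - c‖) := hbc
    _ = 2 * M * (‖w - c‖ / (R - ‖w - c‖)) + ‖F c‖ * ((R + ‖w - c‖) / (R - ‖w - c‖)) := by ring
    _ ≤ 2 * M * 1 + ‖F c‖ * 3 := by gcongr
    _ = 2 * M + 3 * ‖F c‖ := by ring

theorem InnerProductSpace.HarmonicOnNhd.exists_differentiableOn_ball_re_eq {f : ℂ → ℝ} {c : ℂ}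
    {R : ℝ} (hf : HarmonicOnNhd f (ball c R)) :
    ∃ F : ℂ → ℂ, DifferentiableOn ℂ F (ball c R) ∧
      EqOn (fun w => (F w).re) f (ball c R) ∧ (F c).im = 0 := by
  obtain ⟨F, hF, hre⟩ := hf.exists_analyticOnNhd_ball_re_eq
  exact ⟨fun w => F w - (F c).im * I, hF.differentiableOn.sub_const _,
    fun w hw => by simpa using hre hw, by simp⟩

theorem Complex.uniformCauchySeqOn_of_re {F : ℕ → ℂ → ℝ} {G : ℕ → ℂ → ℂ} {c : ℂ} {R : ℝ}
    (hR : 0 < R) (hF : UniformCauchySeqOn F atTop (ball c R))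
    (hG : ∀ n, DifferentiableOn ℂ (G n) (ball c R))
    (hGre : ∀ n, EqOn (fun w => (G n w).re) (F n) (ball c R)) (hGim : ∀ n, (G n c).im = 0) :
    UniformCauchySeqOn G atTop (ball c (R / 2)) := by
  rw [Metric.uniformCauchySeqOn_iff] at hF ⊢
  intro ε hε
  obtain ⟨N, hN⟩ := hF (ε / 5) (by positivity)
  refine ⟨N, fun m hm n hn w hw => ?_⟩
  have hre : ∀ v ∈ ball c R, (G m v - G n v).re = F m v - F n v := fun v hv => by
    rw [sub_re]; exact congrArg₂ (· - ·) (hGre m hv) (hGre n hv)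
  have hc : ‖G m c - G n c‖ < ε / 5 := by
    have hreal : G m c - G n c = ((F m c - F n c : ℝ) : ℂ) :=
      Complex.ext (by simpa using hre c (mem_ball_self hR)) (by simp [hGim])
    rw [hreal, norm_real, Real.norm_eq_abs, ← Real.dist_eq]
    exact hN m hm n hn c (mem_ball_self hR)
  have := Complex.norm_le_of_forall_re_le (F := fun v => G m v - G n v)
    (by positivity : 0 < ε / 5) ((hG m).sub (hG n))
    (fun v hv => (hre v hv).trans_le ((le_abs_self _).trans (hN m hm n hn v hv).le))
    hR (mem_ball.1 hw).le
  rw [dist_eq_norm]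
  linarith

theorem InnerProductSpace.HarmonicOnNhd.of_tendstoLocallyUniformlyOn {F : ℕ → ℂ → ℝ}
    {g : ℂ → ℝ} {D : Set ℂ} (hD : IsOpen D) (hF : ∀ n, HarmonicOnNhd (F n) D)
    (hFg : TendstoLocallyUniformlyOn F g atTop D) :
    HarmonicOnNhd g D := by
  intro z hz
  obtain ⟨R, hR, hRD⟩ := Metric.nhds_basis_closedBall.mem_iff.1 (hD.mem_nhds hz)
  have hball : ball z R ⊆ D := ball_subset_closedBall.trans hRD
  choose G hG hGre hGim using fun n => ((hF n).mono hball).exists_differentiableOn_ball_re_eq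
  have hFU : UniformCauchySeqOn F atTop (ball z R) :=
    ((tendstoLocallyUniformlyOn_iff_forall_isCompact hD).1 hFg _ hRD
      (isCompact_closedBall z R)).uniformCauchySeqOn.mono ball_subset_closedBall
  have hGU := Complex.uniformCauchySeqOn_of_re hR hFU hG hGre hGim
  choose! Φ hΦ using fun w (hw : w ∈ ball z (R / 2)) =>
    cauchySeq_tendsto_of_complete (hGU.cauchySeq hw)
  have hΦd : DifferentiableOn ℂ Φ (ball z (R / 2)) :=
    (hGU.tendstoUniformlyOn_of_tendsto hΦ).tendstoLocallyUniformlyOn.differentiableOn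
      (Eventually.of_forall fun n => (hG n).mono (ball_subset_ball (by linarith))) isOpen_ball
  have hgΦ : EqOn g (fun w => (Φ w).re) (ball z (R / 2)) := fun w hw => by
    have hwR : w ∈ ball z R := ball_subset_ball (by linarith) hw
    refine tendsto_nhds_unique (hFg.tendsto_at (hball hwR)) ?_
    exact ((continuous_re.tendsto _).comp (hΦ w hw)).congr fun n => hGre n hwR
  have hnhds : ball z (R / 2) ∈ 𝓝 z := ball_mem_nhds z (by positivity)
  exact (harmonicAt_congr_nhds (Filter.eventuallyEq_of_mem hnhds hgΦ)).2
    (hΦd.analyticAt hnhds).harmonicAt_re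

theorem InnerProductSpace.HarmonicOnNhd.bddAbove_iff_of_dist_le {ι : Type*} {f : ι → ℂ → ℝ}
    {c w : ℂ} {R : ℝ} (hf : ∀ i, HarmonicOnNhd (f i) (closedBall c R))
    (hf0 : ∀ i, ∀ z ∈ closedBall c R, 0 ≤ f i z) (hR : 0 < R) (hw : dist w c ≤ R / 2) :
    BddAbove (range fun i => f i c) ↔ BddAbove (range fun i => f i w) := by
  have h3 := fun i => (hf i).le_three_mul (hf0 i) hR hw
  constructor <;> rintro ⟨C, hC⟩ <;> refine ⟨3 * C, forall_mem_range.2 fun i => ?_⟩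
  · linarith [(h3 i).1, hC (mem_range_self i)]
  · linarith [(h3 i).2, hC (mem_range_self i)]

theorem InnerProductSpace.HarmonicOnNhd.equicontinuousAt {ι : Type*} {f : ι → ℂ → ℝ}
    {c : ℂ} {R : ℝ} (hf : ∀ i, HarmonicOnNhd (f i) (closedBall c R))
    (hf0 : ∀ i, ∀ z ∈ closedBall c R, 0 ≤ f i z) (hR : 0 < R)
    (hb : BddAbove (range fun i => f i c)) :
    EquicontinuousAt f c := by
  obtain ⟨C, hC⟩ := hb
  refine Metric.equicontinuousAt_of_continuity_modulus
    (fun w => 2 * dist w c / (R - dist w c) * C) ?_ f ?_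
  · have : ContinuousAt (fun w => 2 * dist w c / (R - dist w c) * C) c := by
      fun_prop (disch := simp [hR.ne'])
    simpa using this.tendsto
  · filter_upwards [ball_mem_nhds c hR] with w hw i
    rw [dist_comm, Real.dist_eq]
    refine ((hf i).abs_sub_le (hf0 i) hw).trans ?_
    have : 0 < R - dist w c := sub_pos.2 hw
    gcongr
    exact hC (mem_range_self i)

theorem InnerProductSpace.HarmonicOnNhd.exists_subseq_tendstoLocallyUniformlyOn
    {D : Set ℂ} (hD : IsOpen D) (hDc : IsPreconnected D) {f : ℕ → ℂ → ℝ}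
    (hf : ∀ n, HarmonicOnNhd (f n) D) (hf0 : ∀ n, ∀ z ∈ D, 0 ≤ f n z) {z₀ : ℂ} (hz₀ : z₀ ∈ D)
    (hb : BddAbove (range fun n => f n z₀)) :
    ∃ φ : ℕ → ℕ, StrictMono φ ∧ ∃ g, TendstoLocallyUniformlyOn (fun n => f (φ n)) g atTop D := by
  have hball : ∀ z ∈ D, ∃ R > 0, closedBall z R ⊆ D := fun z hz =>
    Metric.nhds_basis_closedBall.mem_iff.1 (hD.mem_nhds hz)
  have hbdd : ∀ z ∈ D, BddAbove (range fun n => f n z) := by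
    refine fun z hz => (hDc.iff_of_eventually_iff
      (P := fun z => BddAbove (range fun n => f n z)) (fun c hc => ?_) hz₀ hz).1 hb
    obtain ⟨R, hR, hRD⟩ := hball c hc
    filter_upwards [nhdsWithin_le_nhds (closedBall_mem_nhds c (half_pos hR))] with w hw
    exact bddAbove_iff_of_dist_le (fun n => (hf n).mono hRD) (fun n z hz => hf0 n z (hRD hz))
      hR hw
  have hequi : ∀ z ∈ D, EquicontinuousAt f z := fun z hz => by
    obtain ⟨R, hR, hRD⟩ := hball z hz
    exact equicontinuousAt (fun n => (hf n).mono hRD) (fun n z hz => hf0 n z (hRD hz)) hR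
      (hbdd z hz)
  obtain ⟨T, hTc, hTd⟩ := TopologicalSpace.exists_countable_dense ℂ
  have : Countable ↥(D ∩ T) := (hTc.mono inter_subset_right).to_subtype
  choose C hC using fun s : ↥(D ∩ T) => hbdd s s.2.1
  obtain ⟨a, -, φ, hφ, hlim⟩ := (isCompact_univ_pi fun s => isCompact_Icc).tendsto_subseq
    (x := fun n (s : ↥(D ∩ T)) => f n s) fun n s _ => ⟨hf0 n s s.2.1, hC s (mem_range_self n)⟩
  have hcauchy : ∀ z ∈ D, CauchySeq fun n => f (φ n) z := fun z hz =>
    ((hequi z hz).comp φ).cauchySeq_of_mem_closure (hTd.open_subset_closure_inter hD hz)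
      fun y hy => (tendsto_pi_nhds.1 hlim ⟨y, hy⟩).cauchySeq
  choose! g hg using fun z hz => cauchySeq_tendsto_of_complete (hcauchy z hz)
  exact ⟨φ, hφ, g, tendstoLocallyUniformlyOn_of_equicontinuousAt
    (fun z hz => (hequi z hz).comp φ) hg⟩

theorem Real.sInf_image_le_mul_sInf_image {α : Type*} {H : Set α} (hH : H.Nonempty)
    {a b : α → ℝ} (ha : ∀ g ∈ H, 0 ≤ a g) {K : ℝ} (hK : 0 < K) (hab : ∀ g ∈ H, a g ≤ K * b g) :
    sInf (a '' H) ≤ K * sInf (b '' H) := by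
  have hbdd : BddBelow (a '' H) := ⟨0, by rintro _ ⟨g, hg, rfl⟩; exact ha g hg⟩
  rw [← div_le_iff₀' hK]
  refine le_csInf (hH.image b) ?_
  rintro _ ⟨g, hg, rfl⟩
  rw [div_le_iff₀' hK]
  exact (csInf_le hbdd (mem_image_of_mem a hg)).trans (hab g hg)

theorem InfHarmonicOn.nonneg_s6 {u : ℂ → ℝ} {D : Set ℂ} (hu : InfHarmonicOn u D) {z : ℂ}
    (hz : z ∈ D) : 0 ≤ u z := by
  obtain ⟨H, -, -, hpos, hinf⟩ := hu
  rw [hinf z hz]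
  exact Real.sInf_nonneg (by rintro _ ⟨g, hg, rfl⟩; exact hpos g hg z hz)

theorem InfHarmonicOn.le_three_mul {u : ℂ → ℝ} {D : Set ℂ} (hD : IsOpen D)
    (hu : InfHarmonicOn u D) {c w : ℂ} {R : ℝ} (hR : 0 < R) (hRD : closedBall c R ⊆ D)
    (hw : dist w c ≤ R / 2) :
    u w ≤ 3 * u c ∧ u c ≤ 3 * u w := by
  obtain ⟨H, hne, hharm, hpos, hinf⟩ := hu
  have hwD : w ∈ D := hRD (mem_closedBall.2 (by linarith))
  have hcD : c ∈ D := hRD (mem_closedBall_self hR.le)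
  have h3 := fun g (hg : g ∈ H) =>
    (((harmonicOnSet_iff_harmonicOnNhd hD).1 (hharm g hg)).mono hRD).le_three_mul
      (fun z hz => hpos g hg z (hRD hz)) hR hw
  rw [hinf w hwD, hinf c hcD]
  exact ⟨Real.sInf_image_le_mul_sInf_image hne (fun g hg => hpos g hg w hwD) three_pos
      fun g hg => (h3 g hg).1,
    Real.sInf_image_le_mul_sInf_image hne (fun g hg => hpos g hg c hcD) three_pos
      fun g hg => (h3 g hg).2⟩

theorem InfHarmonicOn.exists_lt {u : ℂ → ℝ} {D : Set ℂ} (hu : InfHarmonicOn u D) {z : ℂ}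
    (hz : z ∈ D) {ε : ℝ} (hε : 0 < ε) :
    ∃ g, HarmonicOnSet g D ∧ (∀ w ∈ D, 0 ≤ g w) ∧ (∀ w ∈ D, u w ≤ g w) ∧ g z < u z + ε := by
  obtain ⟨H, hne, hharm, hpos, hinf⟩ := hu
  have hlt : sInf ((fun h => h z) '' H) < u z + ε := by rw [← hinf z hz]; linarith
  obtain ⟨_, ⟨g, hg, rfl⟩, hgz⟩ := exists_lt_of_csInf_lt (hne.image _) hlt
  refine ⟨g, hharm g hg, hpos g hg, fun w hw => ?_, hgz⟩
  rw [hinf w hw]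
  exact csInf_le ⟨0, by rintro _ ⟨h, hh, rfl⟩; exact hpos h hh w hw⟩ ⟨g, hg, rfl⟩

theorem infHarmonicOn_of_forall_exists_majorant {v : ℂ → ℝ} {D : Set ℂ} (hD : D.Nonempty)
    (h : ∀ z ∈ D, ∃ g, HarmonicOnSet g D ∧ (∀ w ∈ D, 0 ≤ g w) ∧ (∀ w ∈ D, v w ≤ g w) ∧
      g z = v z) :
    InfHarmonicOn v D := by
  set H := {g | HarmonicOnSet g D ∧ (∀ w ∈ D, 0 ≤ g w) ∧ ∀ w ∈ D, v w ≤ g w}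
  obtain ⟨z₀, hz₀⟩ := hD
  obtain ⟨g₀, hg₀, hg₀0, hg₀v, -⟩ := h z₀ hz₀
  refine ⟨H, ⟨g₀, hg₀, hg₀0, hg₀v⟩, fun g hg => hg.1, fun g hg => hg.2.1, fun z hz => ?_⟩
  obtain ⟨g, hg, hg0, hgv, hgz⟩ := h z hz
  refine le_antisymm (le_csInf (Set.Nonempty.image _ ⟨g, hg, hg0, hgv⟩) ?_) ?_
  · rintro _ ⟨f, hf, rfl⟩
    exact hf.2.2 z hz
  · rw [← hgz]
    exact csInf_le ⟨0, by rintro _ ⟨f, hf, rfl⟩; exact hf.2.1 z hz⟩ ⟨g, ⟨hg, hg0, hgv⟩, rfl⟩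

theorem InfHarmonicOn.exists_majorant_of_tendsto {D : Set ℂ} (hD : IsOpen D)
    (hDc : IsPreconnected D) {uN : ℕ → ℂ → ℝ} (hu : ∀ n, InfHarmonicOn (uN n) D) {v : ℂ → ℝ}
    (hv : ∀ z ∈ D, Tendsto (fun n => uN n z) atTop (𝓝 (v z))) {z₀ : ℂ} (hz₀ : z₀ ∈ D) :
    ∃ g, HarmonicOnSet g D ∧ (∀ w ∈ D, 0 ≤ g w) ∧ (∀ w ∈ D, v w ≤ g w) ∧ g z₀ = v z₀ := by
  choose g hg hg0 hgu hgz₀ using fun n => (hu n).exists_lt hz₀ (Nat.one_div_pos_of_nat (n := n))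
  have hgh := fun n => (harmonicOnSet_iff_harmonicOnNhd hD).1 (hg n)
  have hb : BddAbove (range fun n => g n z₀) := by
    obtain ⟨B, hB⟩ := (hv z₀ hz₀).bddAbove_range
    refine ⟨B + 1, forall_mem_range.2 fun n => ?_⟩
    have : 1 / ((n : ℝ) + 1) ≤ 1 := by rw [div_le_one (by positivity)]; simp
    linarith [hgz₀ n, hB (mem_range_self n)]
  obtain ⟨φ, hφ, G, hG⟩ :=
    HarmonicOnNhd.exists_subseq_tendstoLocallyUniformlyOn hD hDc hgh hg0 hz₀ hb
  have hGv : ∀ z ∈ D, v z ≤ G z := fun z hz =>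
    le_of_tendsto_of_tendsto' ((hv z hz).comp hφ.tendsto_atTop) (hG.tendsto_at hz)
      fun n => hgu (φ n) z hz
  have hvε : Tendsto (fun n => uN (φ n) z₀ + 1 / ((φ n : ℝ) + 1)) atTop (𝓝 (v z₀)) := by
    simpa [Function.comp_def] using
      ((hv z₀ hz₀).add tendsto_one_div_add_atTop_nhds_zero_nat).comp hφ.tendsto_atTop
  refine ⟨G, (harmonicOnSet_iff_harmonicOnNhd hD).2
      (HarmonicOnNhd.of_tendstoLocallyUniformlyOn hD (fun n => hgh (φ n)) hG),
    fun z hz => ge_of_tendsto' (hG.tendsto_at hz) fun n => hg0 (φ n) z hz, hGv,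
    le_antisymm ?_ (hGv z₀ hz₀)⟩
  exact le_of_tendsto_of_tendsto' (hG.tendsto_at hz₀) hvε fun n => (hgz₀ (φ n)).le

theorem InfHarmonicOn.of_tendsto {D : Set ℂ} (hD : IsOpen D) (hDc : IsConnected D)
    {uN : ℕ → ℂ → ℝ} (hu : ∀ n, InfHarmonicOn (uN n) D) {v : ℂ → ℝ}
    (hv : ∀ z ∈ D, Tendsto (fun n => uN n z) atTop (𝓝 (v z))) :
    InfHarmonicOn v D :=
  infHarmonicOn_of_forall_exists_majorant hDc.nonempty fun _ hz =>
    exists_majorant_of_tendsto hD hDc.isPreconnected hu hv hz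

theorem ENNReal.le_ofReal_mul_of_tendsto {a b : ℕ → ℝ} {x y : ℝ≥0∞}
    (ha : Tendsto (fun n => ENNReal.ofReal (a n)) atTop (𝓝 x))
    (hb : Tendsto (fun n => ENNReal.ofReal (b n)) atTop (𝓝 y)) {K : ℝ} (hK : 0 ≤ K)
    (hab : ∀ n, a n ≤ K * b n) :
    x ≤ ENNReal.ofReal K * y :=
  le_of_tendsto_of_tendsto' ha (ENNReal.Tendsto.const_mul hb (Or.inr ofReal_ne_top)) fun n =>
    (ofReal_le_ofReal (hab n)).trans (ofReal_mul hK).le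

theorem InfHarmonicOn.eq_top_or_ne_top_of_tendsto {D : Set ℂ} (hD : IsOpen D)
    (hDc : IsPreconnected D) {uN : ℕ → ℂ → ℝ} (hu : ∀ n, InfHarmonicOn (uN n) D)
    {u : ℂ → ℝ≥0∞} (hconv : ∀ z ∈ D, Tendsto (fun n => ENNReal.ofReal (uN n z)) atTop (𝓝 (u z))) :
    (∀ z ∈ D, u z = ⊤) ∨ ∀ z ∈ D, u z ≠ ⊤ := by
  have hloc : ∀ c ∈ D, ∀ᶠ w in 𝓝[D] c, (u c = ⊤ ↔ u w = ⊤) := by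
    intro c hc
    obtain ⟨R, hR, hRD⟩ := Metric.nhds_basis_closedBall.mem_iff.1 (hD.mem_nhds hc)
    filter_upwards [self_mem_nhdsWithin,
      nhdsWithin_le_nhds (closedBall_mem_nhds c (half_pos hR))] with w hwD hw
    have h3 := fun n => (hu n).le_three_mul hD hR hRD hw
    have hwc := ENNReal.le_ofReal_mul_of_tendsto (hconv w hwD) (hconv c hc) zero_le_three
      fun n => (h3 n).1
    have hcw := ENNReal.le_ofReal_mul_of_tendsto (hconv c hc) (hconv w hwD) zero_le_three
      fun n => (h3 n).2
    constructor <;> intro h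
    · simpa [h, ENNReal.mul_eq_top] using hcw
    · simpa [h, ENNReal.mul_eq_top] using hwc
  by_cases h : ∃ z₀ ∈ D, u z₀ = ⊤
  · obtain ⟨z₀, hz₀, h⟩ := h
    exact Or.inl fun z hz => (hDc.iff_of_eventually_iff hloc hz₀ hz).1 h
  · exact Or.inr fun z hz hz' => h ⟨z, hz, hz'⟩

theorem infHarmonic_pointwise_limit (D : Set ℂ) (hD : IsOpen D) (hDc : IsConnected D)
    (uN : ℕ → ℂ → ℝ) (hu : ∀ n, InfHarmonicOn (uN n) D)
    (u : ℂ → ℝ≥0∞)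
    (hconv : ∀ z ∈ D,
      Filter.Tendsto (fun n => ENNReal.ofReal (uN n z)) Filter.atTop (nhds (u z))) :
    (∀ z ∈ D, u z = ⊤) ∨
    ((∀ z ∈ D, u z ≠ ⊤) ∧ InfHarmonicOn (fun z => (u z).toReal) D) := by
  refine (InfHarmonicOn.eq_top_or_ne_top_of_tendsto hD hDc.isPreconnected hu hconv).imp_right
    fun hfin => ⟨hfin, InfHarmonicOn.of_tendsto hD hDc hu fun z hz => ?_⟩
  exact ((ENNReal.tendsto_toReal (hfin z hz)).comp (hconv z hz)).congr fun n =>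
    ENNReal.toReal_ofReal ((hu n).nonneg_s6 hz)
end

section
/- Abstract implicit function theorem for inf-cones: Let X be a set and 𝓤 an inf-cone of functions X → [0,∞) (closed under nonnegative linear combinations and under arbitrary pointwise infima of nonempty subfamilies). Let (u_j)_{j≥1} be a sequence in 𝓤 and for each j let φ_j : [0,∞) → [0,∞) be continuous, decreasing and convex. Define v(x) := sup{ t > 0 : ∑_{j≥1} φ_j(u_j(x)/t) ≤ 1 } (with sup ∅ = 0). Then either v ∈ 𝓤 or v ≡ ∞ on X. -/
open Set Filter
open scoped ENNReal

/-- An inf-cone on `X`: a family of nonnegative functions closed under nonnegative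
linear combinations and under pointwise infima of nonempty subfamilies. -/
def IsInfCone {X : Type*} (U : Set (X → ℝ)) : Prop :=
  (∀ u ∈ U, ∀ x, 0 ≤ u x) ∧
  (∀ u ∈ U, ∀ v ∈ U, ∀ α β : ℝ, 0 ≤ α → 0 ≤ β → (fun x => α * u x + β * v x) ∈ U) ∧
  (∀ V ⊆ U, V.Nonempty → (fun x => sInf ((fun f => f x) '' V)) ∈ U)

/-- Approximate affine minorant of a continuous decreasing convex function on `[0, ∞)`. -/
lemma exists_affine_minorant (φ : ℝ → ℝ) (hc : ContinuousOn φ (Set.Ici 0))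
    (hd : AntitoneOn φ (Set.Ici 0)) (hx : ConvexOn ℝ (Set.Ici 0) φ)
    (y₀ : ℝ) (hy₀ : 0 ≤ y₀) (δ : ℝ) (hδ : 0 < δ) :
    ∃ a b : ℝ, 0 ≤ a ∧ (∀ y, 0 ≤ y → b - a * y ≤ φ y) ∧ φ y₀ - δ ≤ b - a * y₀ := by
  -- find w > y₀ with φ w close to φ y₀
  obtain ⟨w, hw2, hw1⟩ : ∃ w, φ y₀ - δ < φ w ∧ y₀ < w := by
    have h1 : Filter.Tendsto φ (nhdsWithin y₀ (Set.Ioi y₀)) (nhds (φ y₀)) :=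
      (hc y₀ hy₀).tendsto.mono_left (nhdsWithin_mono _ (fun z hz => le_of_lt
        (lt_of_le_of_lt hy₀ hz)))
    have h2 : ∀ᶠ w in nhdsWithin y₀ (Set.Ioi y₀), φ y₀ - δ < φ w :=
      h1.eventually (eventually_gt_nhds (by linarith))
    exact (h2.and (eventually_mem_nhdsWithin)).exists
  have hw0 : (0:ℝ) < w := lt_of_le_of_lt hy₀ hw1
  have hwI : w ∈ Set.Ici (0:ℝ) := le_of_lt hw0
  -- subgradient slope at w
  set T : Set ℝ := (fun z => (φ z - φ w) / (z - w)) '' Set.Ioi w with hT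
  have hTne : T.Nonempty := ⟨_, ⟨w + 1, by simp [lt_add_one], rfl⟩⟩
  have hTbdd : BddBelow T := by
    refine ⟨(φ w - φ (w/2)) / (w - w/2), ?_⟩
    rintro q ⟨z, hz, rfl⟩
    exact hx.slope_mono_adjacent (by simp [le_of_lt, hw0, le_of_lt (half_pos hw0)])
      (le_of_lt (lt_trans hw0 hz)) (by linarith) hz
  set s : ℝ := sInf T with hs
  have key1 : ∀ z, w < z → s ≤ (φ z - φ w) / (z - w) := fun z hz =>
    csInf_le hTbdd ⟨z, hz, rfl⟩
  have key2 : ∀ p, 0 ≤ p → p < w → (φ w - φ p) / (w - p) ≤ s := by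
    intro p hp hpw
    refine le_csInf hTne ?_
    rintro q ⟨z, hz, rfl⟩
    exact hx.slope_mono_adjacent hp (le_of_lt (lt_trans hw0 hz)) hpw hz
  have hs0 : s ≤ 0 := by
    have h := key1 (w + 1) (lt_add_one w)
    have h2 : φ (w + 1) ≤ φ w := hd hwI (mem_Ici.2 (by linarith)) (by linarith)
    have : (φ (w+1) - φ w) / (w + 1 - w) ≤ 0 := by
      apply div_nonpos_of_nonpos_of_nonneg <;> linarith
    linarith
  refine ⟨-s, φ w - s * w, by linarith, ?_, ?_⟩
  · intro y hy
    rcases lt_trichotomy y w with h | h | h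
    · have := (div_le_iff₀ (by linarith : (0:ℝ) < w - y)).1 (key2 y hy h)
      have hexp : s * (w - y) = s * w - s * y := by ring
      -- φ w - φ y ≤ s * (w - y)
      nlinarith [this]
    · subst h; ring_nf; linarith
    · have := (le_div_iff₀ (by linarith : (0:ℝ) < y - w)).1 (key1 y h)
      nlinarith [this]
  · have hnn : 0 ≤ (-s) * (w - y₀) := mul_nonneg (by linarith) (by linarith)
    nlinarith [hnn]

theorem infCone_implicit_function {X : Type*} (U : Set (X → ℝ)) (hU : IsInfCone U)
    (u : ℕ → X → ℝ) (hu : ∀ j, u j ∈ U)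
    (φ : ℕ → ℝ → ℝ)
    (hφc : ∀ j, ContinuousOn (φ j) (Set.Ici 0))
    (hφd : ∀ j, AntitoneOn (φ j) (Set.Ici 0))
    (hφx : ∀ j, ConvexOn ℝ (Set.Ici 0) (φ j))
    (hφ0 : ∀ j, ∀ y : ℝ, 0 ≤ y → 0 ≤ φ j y) :
    (∀ x, ¬ BddAbove {t : ℝ | 0 < t ∧ ∑' j, ENNReal.ofReal (φ j (u j x / t)) ≤ 1}) ∨
    (fun x => sSup {t : ℝ | 0 < t ∧ ∑' j, ENNReal.ofReal (φ j (u j x / t)) ≤ 1}) ∈ U := by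
  have hnn : ∀ j x, 0 ≤ u j x := fun j x => hU.1 (u j) (hu j) x
  by_cases hone : ∑' j, ENNReal.ofReal (φ j 0) ≤ 1
  · -- every t > 0 is admissible, so the set is unbounded
    left
    intro x hbdd
    have hsub : Set.Ioi (0:ℝ) ⊆ {t : ℝ | 0 < t ∧ ∑' j, ENNReal.ofReal (φ j (u j x / t)) ≤ 1} := by
      intro t ht
      refine ⟨ht, le_trans (ENNReal.tsum_le_tsum fun j => ENNReal.ofReal_le_ofReal ?_) hone⟩
      exact hφd j self_mem_Ici (div_nonneg (hnn j x) (le_of_lt ht)) (div_nonneg (hnn j x) (le_of_lt ht))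
    exact not_bddAbove_Ioi (a := (0:ℝ)) (hbdd.mono hsub)
  · right
    push_neg at hone
    -- the zero function is in U
    have hzero : (fun _ : X => (0:ℝ)) ∈ U := by
      have := hU.2.1 (u 0) (hu 0) (u 0) (hu 0) 0 0 le_rfl le_rfl
      simpa using this
    -- finite nonnegative combinations are in U
    have comb : ∀ (J : Finset ℕ) (c : ℕ → ℝ), (∀ j ∈ J, 0 ≤ c j) →
        (fun x => ∑ j ∈ J, c j * u j x) ∈ U := by
      intro J
      induction J using Finset.induction_on with
      | empty => intro c _; simpa using hzero
      | @insert a J' haJ ih =>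
        intro c hc
        have h1 := ih c (fun j hjm => hc j (Finset.mem_insert_of_mem hjm))
        have h2 := hU.2.1 (u a) (hu a) _ h1 (c a) 1
          (hc a (Finset.mem_insert_self a J')) zero_le_one
        have heq : (fun x => c a * u a x + 1 * ∑ j ∈ J', c j * u j x)
            = fun x => ∑ j ∈ insert a J', c j * u j x := by
          funext x; rw [Finset.sum_insert haJ, one_mul]
        rwa [heq] at h2
    set S : X → Set ℝ :=
      fun x => {t : ℝ | 0 < t ∧ ∑' j, ENNReal.ofReal (φ j (u j x / t)) ≤ 1} with hSdef
    set V : Set (X → ℝ) := {f | ∃ (J : Finset ℕ) (a b : ℕ → ℝ),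
        (∀ j ∈ J, 0 ≤ a j) ∧ (∀ j ∈ J, ∀ y : ℝ, 0 ≤ y → b j - a j * y ≤ φ j y) ∧
        1 < ∑ j ∈ J, b j ∧
        f = fun x => (∑ j ∈ J, a j * u j x) / ((∑ j ∈ J, b j) - 1)} with hVdef
    have hVsub : V ⊆ U := by
      rintro f ⟨J, a, b, ha, hmin, hB, rfl⟩
      have hg := comb J a ha
      have h2 := hU.2.1 _ hg _ hg (((∑ j ∈ J, b j) - 1)⁻¹) 0
        (inv_nonneg.2 (by linarith)) le_rfl
      have heq : (fun x => ((∑ j ∈ J, b j) - 1)⁻¹ * (∑ j ∈ J, a j * u j x)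
            + 0 * (∑ j ∈ J, a j * u j x))
          = fun x => (∑ j ∈ J, a j * u j x) / ((∑ j ∈ J, b j) - 1) := by
        funext x; rw [zero_mul, add_zero, div_eq_inv_mul]
      rwa [heq] at h2
    -- Direction 2: from a failing sum, produce a strict affine witness
    have D2 : ∀ (y : ℕ → ℝ), (∀ j, 0 ≤ y j) → 1 < ∑' j, ENNReal.ofReal (φ j (y j)) →
        ∃ (J : Finset ℕ) (a b : ℕ → ℝ), (∀ j ∈ J, 0 ≤ a j) ∧
          (∀ j ∈ J, ∀ z : ℝ, 0 ≤ z → b j - a j * z ≤ φ j z) ∧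
          1 < ∑ j ∈ J, (b j - a j * y j) := by
      intro y hy hsum
      rw [ENNReal.tsum_eq_iSup_sum, lt_iSup_iff] at hsum
      obtain ⟨J, hJ⟩ := hsum
      rw [← ENNReal.ofReal_sum_of_nonneg (fun j _ => hφ0 j (y j) (hy j)),
        ENNReal.one_lt_ofReal] at hJ
      have hJne : J.Nonempty := by
        rcases J.eq_empty_or_nonempty with h | h
        · exfalso; rw [h, Finset.sum_empty] at hJ; linarith
        · exact h
      have hcard : (0:ℝ) < (J.card : ℝ) := by
        exact_mod_cast Nat.cast_pos.2 (Finset.card_pos.2 hJne)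
      set σ := ∑ j ∈ J, φ j (y j) with hσ
      set δ := (σ - 1) / (2 * J.card) with hδdef
      have hδ : 0 < δ := div_pos (by linarith) (by positivity)
      choose a b ha hmin htouch using fun j =>
        exists_affine_minorant (φ j) (hφc j) (hφd j) (hφx j) (y j) (hy j) δ hδ
      refine ⟨J, a, b, fun j _ => ha j, fun j _ => hmin j, ?_⟩
      have hsum2 : ∑ j ∈ J, (φ j (y j) - δ) ≤ ∑ j ∈ J, (b j - a j * y j) :=
        Finset.sum_le_sum fun j _ => htouch j
      have hsum3 : ∑ j ∈ J, (φ j (y j) - δ) = σ - J.card * δ := by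
        rw [Finset.sum_sub_distrib, Finset.sum_const, nsmul_eq_mul, hσ]
      have hcd : (J.card : ℝ) * δ = (σ - 1) / 2 := by
        rw [hδdef]; field_simp
      have : 1 < σ - (J.card : ℝ) * δ := by rw [hcd]; linarith
      linarith [hsum2, hsum3.symm.le]
    -- Direction 1: each member of V dominates every admissible t
    have D1 : ∀ x t, t ∈ S x → ∀ (J : Finset ℕ) (a b : ℕ → ℝ),
        (∀ j ∈ J, 0 ≤ a j) → (∀ j ∈ J, ∀ y : ℝ, 0 ≤ y → b j - a j * y ≤ φ j y) →
        1 < ∑ j ∈ J, b j →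
        t ≤ (∑ j ∈ J, a j * u j x) / ((∑ j ∈ J, b j) - 1) := by
      rintro x t ⟨ht, hts⟩ J a b ha hmin hB
      have hynn : ∀ j, 0 ≤ u j x / t := fun j => div_nonneg (hnn j x) (le_of_lt ht)
      have hfin : ∑ j ∈ J, φ j (u j x / t) ≤ 1 := by
        have h1 : ∑ j ∈ J, ENNReal.ofReal (φ j (u j x / t)) ≤ 1 :=
          le_trans (ENNReal.sum_le_tsum J) hts
        rwa [← ENNReal.ofReal_sum_of_nonneg (fun j _ => hφ0 j _ (hynn j)),
          ENNReal.ofReal_le_one] at h1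
      have h2 : ∑ j ∈ J, (b j - a j * (u j x / t)) ≤ 1 :=
        le_trans (Finset.sum_le_sum fun j hj => hmin j hj _ (hynn j)) hfin
      rw [Finset.sum_sub_distrib] at h2
      have h3 : ∑ j ∈ J, a j * (u j x / t) = (∑ j ∈ J, a j * u j x) / t := by
        rw [Finset.sum_div]; exact Finset.sum_congr rfl fun j _ => (mul_div_assoc _ _ _).symm
      rw [h3] at h2
      rw [le_div_iff₀ (by linarith : (0:ℝ) < (∑ j ∈ J, b j) - 1)]
      have h4 : (∑ j ∈ J, b j) - 1 ≤ (∑ j ∈ J, a j * u j x) / t := by linarith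
      calc t * ((∑ j ∈ J, b j) - 1) ≤ t * ((∑ j ∈ J, a j * u j x) / t) :=
            mul_le_mul_of_nonneg_left h4 (le_of_lt ht)
        _ = (∑ j ∈ J, a j * u j x) := by field_simp
    -- V is nonempty
    obtain ⟨J₀, a₀, b₀, ha₀, hmin₀, hB₀'⟩ := D2 (fun _ => 0) (fun _ => le_rfl) hone
    simp only [mul_zero, sub_zero] at hB₀'
    have hf₀V : (fun x => (∑ j ∈ J₀, a₀ j * u j x) / ((∑ j ∈ J₀, b₀ j) - 1)) ∈ V :=
      ⟨J₀, a₀, b₀, ha₀, hmin₀, hB₀', rfl⟩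
    -- pointwise identification of sSup with the infimum over V
    have key : (fun x => sSup (S x)) = fun x => sInf ((fun f => f x) '' V) := by
      funext x
      have himg_ne : ((fun f => f x) '' V).Nonempty := ⟨_, _, hf₀V, rfl⟩
      have hlb : ∀ r ∈ (fun f => f x) '' V, (0:ℝ) ≤ r := by
        rintro r ⟨f, ⟨J, a, b, ha, hmin, hB, rfl⟩, rfl⟩
        exact div_nonneg
          (Finset.sum_nonneg fun j hj => mul_nonneg (ha j hj) (hnn j x)) (by linarith)
      have hbdd_img : BddBelow ((fun f => f x) '' V) := ⟨0, hlb⟩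
      have hub : ∀ t ∈ S x, ∀ r ∈ (fun f => f x) '' V, t ≤ r := by
        rintro t ht r ⟨f, ⟨J, a, b, ha, hmin, hB, rfl⟩, rfl⟩
        exact D1 x t ht J a b ha hmin hB
      have hSbdd : BddAbove (S x) := by
        refine ⟨_, fun t ht => hub t ht _ ⟨_, hf₀V, rfl⟩⟩
      apply le_antisymm
      · rcases (S x).eq_empty_or_nonempty with he | hne
        · rw [he, Real.sSup_empty]
          exact le_csInf himg_ne hlb
        · exact csSup_le hne fun t ht => le_csInf himg_ne fun r hr => hub t ht r hr
      · by_contra hlt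
        push_neg at hlt
        obtain ⟨t, ht1, ht2⟩ := exists_between hlt
        have hs0 : 0 ≤ sSup (S x) := Real.sSup_nonneg fun z hz => le_of_lt hz.1
        have ht0 : 0 < t := lt_of_le_of_lt hs0 ht1
        have htS : t ∉ S x := fun h => absurd (le_csSup hSbdd h) (not_le.2 ht1)
        have hsum : 1 < ∑' j, ENNReal.ofReal (φ j (u j x / t)) := by
          by_contra h
          push_neg at h
          exact htS ⟨ht0, h⟩
        obtain ⟨J, a, b, ha, hmin, hstr⟩ := D2 (fun j => u j x / t)
          (fun j => div_nonneg (hnn j x) (le_of_lt ht0)) hsum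
        have hay : 0 ≤ ∑ j ∈ J, a j * (u j x / t) :=
          Finset.sum_nonneg fun j hj => mul_nonneg (ha j hj)
            (div_nonneg (hnn j x) (le_of_lt ht0))
        rw [Finset.sum_sub_distrib] at hstr
        have hB : 1 < ∑ j ∈ J, b j := by linarith
        have hfV : (fun x' => (∑ j ∈ J, a j * u j x') / ((∑ j ∈ J, b j) - 1)) ∈ V :=
          ⟨J, a, b, ha, hmin, hB, rfl⟩
        have hfx : (∑ j ∈ J, a j * u j x) / ((∑ j ∈ J, b j) - 1) < t := by
          have h5 : ∑ j ∈ J, a j * u j x = t * ∑ j ∈ J, a j * (u j x / t) := by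
            rw [Finset.mul_sum]
            refine Finset.sum_congr rfl fun j _ => ?_
            field_simp
          have h6 : ∑ j ∈ J, a j * (u j x / t) < (∑ j ∈ J, b j) - 1 := by linarith
          rw [h5, div_lt_iff₀ (by linarith : (0:ℝ) < (∑ j ∈ J, b j) - 1)]
          exact mul_lt_mul_of_pos_left h6 ht0
        have hle : sInf ((fun f => f x) '' V) ≤
            (∑ j ∈ J, a j * u j x) / ((∑ j ∈ J, b j) - 1) :=
          csInf_le hbdd_img ⟨_, hfV, rfl⟩
        linarith
    rw [key]
    exact hU.2.2 V hVsub ⟨_, hf₀V⟩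
end

section
/- Implicit function theorem for inf-harmonic functions: Let D ⊆ ℂ be a domain and let (a_j) be a finite or countable sequence of functions a_j : D → (0,1) such that log(1/a_j) is inf-harmonic on D for each j. Let c > 0 and define s(λ) := inf{ α > 0 : ∑_j a_j(λ)^α ≤ c } (with inf ∅ = ∞). Then either s ≡ 0 on D, or 1/s is an inf-harmonic function on D. -/
open Complex Metric Set Filter
open scoped ENNReal

/-!
Gibbs' variational principle gives, for every finitely supported probability vector `p` with
entropy `H(p)`, `H(p) - α ∑ⱼ pⱼ log (1/aⱼ) ≤ log ∑ⱼ aⱼ^α`, with equality for `pⱼ ∝ aⱼ^α`.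
Hence `∑ⱼ aⱼ^α ≤ c` on every finite subfamily iff `α ∑ⱼ pⱼ log (1/aⱼ) ≥ H(p) - log c` for all `p`,
and so `1/s = inf_p (∑ⱼ pⱼ log (1/aⱼ)) / (H(p) - log c)` over the `p` with `H(p) > log c`.
Nonnegative combinations and infima of inf-harmonic functions are inf-harmonic, so `1/s` is.
No admissible `p` exists exactly when every finite subfamily has at most `c` members, and then
`s ≡ 0`.
-/

lemma HarmonicOnSet.const {D : Set ℂ} (hD : IsOpen D) (r : ℝ) : HarmonicOnSet (fun _ => r) D := by
  intro z hz
  obtain ⟨ε, hε, hball⟩ := Metric.isOpen_iff.1 hD z hz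
  exact ⟨ε, hε, hball, fun _ => r, differentiableOn_const _, fun _ _ => by simp⟩

lemma HarmonicOnSet.add {D : Set ℂ} {f g : ℂ → ℝ} (hf : HarmonicOnSet f D)
    (hg : HarmonicOnSet g D) : HarmonicOnSet (f + g) D := by
  intro z hz
  obtain ⟨ε₁, hε₁, hD₁, F₁, hF₁, hfF₁⟩ := hf z hz
  obtain ⟨ε₂, hε₂, -, F₂, hF₂, hgF₂⟩ := hg z hz
  have h₁ : ball z (min ε₁ ε₂) ⊆ ball z ε₁ := ball_subset_ball (min_le_left _ _)
  have h₂ : ball z (min ε₁ ε₂) ⊆ ball z ε₂ := ball_subset_ball (min_le_right _ _)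
  refine ⟨min ε₁ ε₂, lt_min hε₁ hε₂, h₁.trans hD₁, F₁ + F₂,
    (hF₁.mono h₁).add (hF₂.mono h₂), fun w hw => ?_⟩
  simp [hfF₁ w (h₁ hw), hgF₂ w (h₂ hw)]

lemma HarmonicOnSet.const_mul {D : Set ℂ} {f : ℂ → ℝ} (hf : HarmonicOnSet f D) (r : ℝ) :
    HarmonicOnSet (fun z => r * f z) D := by
  intro z hz
  obtain ⟨ε, hε, hD, F, hF, hfF⟩ := hf z hz
  exact ⟨ε, hε, hD, fun w => r * F w, hF.const_mul _, fun w hw => by simp [hfF w hw]⟩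

open scoped Pointwise

lemma infHarmonicOn_iff_isGLB {u : ℂ → ℝ} {D : Set ℂ} :
    InfHarmonicOn u D ↔ ∃ H : Set (ℂ → ℝ), H.Nonempty ∧ (∀ h ∈ H, HarmonicOnSet h D) ∧
      (∀ h ∈ H, ∀ z ∈ D, 0 ≤ h z) ∧ ∀ z ∈ D, IsGLB ((fun h => h z) '' H) (u z) := by
  refine exists_congr fun H => and_congr_right fun hne => and_congr_right fun _ =>
    and_congr_right fun hnonneg => forall₂_congr fun z hz => ?_
  have hbdd : BddBelow ((fun h => h z) '' H) := ⟨0, by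
    rintro _ ⟨h, hh, rfl⟩
    exact hnonneg h hh z hz⟩
  exact ⟨fun hu => hu ▸ isGLB_csInf (hne.image _) hbdd, fun hu => (hu.csInf_eq (hne.image _)).symm⟩

namespace InfHarmonicOn

variable {D : Set ℂ}

lemma const (hD : IsOpen D) {r : ℝ} (hr : 0 ≤ r) : InfHarmonicOn (fun _ => r) D :=
  ⟨{fun _ => r}, singleton_nonempty _, by simpa using HarmonicOnSet.const hD r,
    by simpa using fun _ _ => hr, fun _ _ => by simp⟩

lemma add {u v : ℂ → ℝ} (hu : InfHarmonicOn u D) (hv : InfHarmonicOn v D) :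
    InfHarmonicOn (u + v) D := by
  obtain ⟨H₁, hne₁, hharm₁, hnonneg₁, hglb₁⟩ := infHarmonicOn_iff_isGLB.1 hu
  obtain ⟨H₂, hne₂, hharm₂, hnonneg₂, hglb₂⟩ := infHarmonicOn_iff_isGLB.1 hv
  refine infHarmonicOn_iff_isGLB.2 ⟨H₁ + H₂, hne₁.add hne₂, ?_, ?_, fun z hz => ?_⟩
  · rintro _ ⟨g, hg, h, hh, rfl⟩
    exact (hharm₁ g hg).add (hharm₂ h hh)
  · rintro _ ⟨g, hg, h, hh, rfl⟩ z hz
    exact add_nonneg (hnonneg₁ g hg z hz) (hnonneg₂ h hh z hz)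
  · have himage : (fun h : ℂ → ℝ => h z) '' (H₁ + H₂) =
        (fun h => h z) '' H₁ + (fun h => h z) '' H₂ :=
      Set.image_add (Pi.evalAddMonoidHom (fun _ => ℝ) z)
    rw [himage]
    exact (hglb₁ z hz).add (hglb₂ z hz)

lemma const_mul {u : ℂ → ℝ} (hu : InfHarmonicOn u D) {r : ℝ} (hr : 0 ≤ r) :
    InfHarmonicOn (fun z => r * u z) D := by
  obtain ⟨H, hne, hharm, hnonneg, hglb⟩ := infHarmonicOn_iff_isGLB.1 hu
  refine infHarmonicOn_iff_isGLB.2 ⟨(fun h z => r * h z) '' H, hne.image _, ?_, ?_, fun z hz => ?_⟩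
  · rintro _ ⟨h, hh, rfl⟩
    exact (hharm h hh).const_mul r
  · rintro _ ⟨h, hh, rfl⟩ z hz
    exact mul_nonneg hr (hnonneg h hh z hz)
  · simpa only [Set.image_image] using (hglb z hz).mul_left hr

lemma div_const {u : ℂ → ℝ} (hu : InfHarmonicOn u D) {r : ℝ} (hr : 0 ≤ r) :
    InfHarmonicOn (fun z => u z / r) D := by
  simpa only [div_eq_inv_mul] using hu.const_mul (inv_nonneg.2 hr)

lemma finset_sum (hD : IsOpen D) {ι : Type*} (F : Finset ι) {u : ι → ℂ → ℝ}
    (hu : ∀ j ∈ F, InfHarmonicOn (u j) D) : InfHarmonicOn (fun z => ∑ j ∈ F, u j z) D := by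
  rw [← Finset.sum_fn]
  exact Finset.sum_induction _ (fun f => InfHarmonicOn f D) (fun _ _ => add)
    (const hD le_rfl) hu

lemma of_isGLB_range {κ : Type*} [Nonempty κ] {v : κ → ℂ → ℝ} (hv : ∀ k, InfHarmonicOn (v k) D)
    {u : ℂ → ℝ} (hu : ∀ z ∈ D, IsGLB (range fun k => v k z) (u z)) : InfHarmonicOn u D := by
  choose H hne hharm hnonneg hglb using fun k => infHarmonicOn_iff_isGLB.1 (hv k)
  refine infHarmonicOn_iff_isGLB.2 ⟨⋃ k, H k, ?_, ?_, ?_, fun z hz => ?_⟩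
  · exact (hne (Classical.arbitrary κ)).mono (subset_iUnion _ _)
  · intro h hh
    obtain ⟨k, hk⟩ := mem_iUnion.1 hh
    exact hharm k h hk
  · intro h hh
    obtain ⟨k, hk⟩ := mem_iUnion.1 hh
    exact hnonneg k h hk
  · rw [Set.image_iUnion]
    exact (isGLB_iUnion_iff_of_isGLB (fun k => hglb k z hz) (u z)).1 (hu z hz)

end InfHarmonicOn

structure FinDistrib (ι : Type*) where
  carrier : Finset ι
  weight : ι → ℝ
  weight_nonneg : ∀ j ∈ carrier, 0 ≤ weight j
  sum_weight : ∑ j ∈ carrier, weight j = 1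

namespace FinDistrib

variable {ι : Type*}

noncomputable def entropy (q : FinDistrib ι) : ℝ := ∑ j ∈ q.carrier, Real.negMulLog (q.weight j)

noncomputable def mean (q : FinDistrib ι) (u : ι → ℝ) : ℝ := ∑ j ∈ q.carrier, q.weight j * u j

lemma mean_pos (q : FinDistrib ι) {u : ι → ℝ} (hu : ∀ j ∈ q.carrier, 0 < u j) : 0 < q.mean u := by
  obtain ⟨j, hj, hqj⟩ := Finset.exists_ne_zero_of_sum_ne_zero (q.sum_weight ▸ one_ne_zero)
  exact Finset.sum_pos' (fun i hi => mul_nonneg (q.weight_nonneg i hi) (hu i hi).le)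
    ⟨j, hj, mul_pos ((q.weight_nonneg j hj).lt_of_ne' hqj) (hu j hj)⟩

lemma mean_log_rpow (q : FinDistrib ι) {a : ι → ℝ} (ha : ∀ j ∈ q.carrier, 0 < a j) (α : ℝ) :
    q.mean (fun j => Real.log (a j ^ α)) = -(α * q.mean fun j => Real.log (1 / a j)) := by
  rw [mean, mean, Finset.mul_sum, ← Finset.sum_neg_distrib]
  refine Finset.sum_congr rfl fun j hj => ?_
  rw [Real.log_rpow (ha j hj), one_div, Real.log_inv]
  ring

noncomputable def uniform (F : Finset ι) (hF : F.Nonempty) : FinDistrib ι where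
  carrier := F
  weight _ := (F.card : ℝ)⁻¹
  weight_nonneg _ _ := by positivity
  sum_weight := by
    rw [Finset.sum_const, nsmul_eq_mul, mul_inv_cancel₀ (by exact_mod_cast hF.card_ne_zero)]

lemma entropy_uniform (F : Finset ι) (hF : F.Nonempty) :
    (uniform F hF).entropy = Real.log F.card := by
  have hcard : (F.card : ℝ) ≠ 0 := by exact_mod_cast hF.card_ne_zero
  simp only [entropy, uniform, Real.negMulLog, Finset.sum_const, nsmul_eq_mul, Real.log_inv]
  field_simp

noncomputable def gibbs (F : Finset ι) (x : ι → ℝ) (hx : ∀ j ∈ F, 0 < x j) (hF : F.Nonempty) :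
    FinDistrib ι where
  carrier := F
  weight j := x j / ∑ i ∈ F, x i
  weight_nonneg j hj := div_nonneg (hx j hj).le (Finset.sum_nonneg fun i hi => (hx i hi).le)
  sum_weight := by
    rw [← Finset.sum_div, div_self (Finset.sum_pos hx hF).ne']

/-- Gibbs' inequality. -/
lemma entropy_add_mean_log_le (q : FinDistrib ι) {x : ι → ℝ} (hx : ∀ j ∈ q.carrier, 0 < x j) :
    q.entropy + q.mean (fun j => Real.log (x j)) ≤ Real.log (∑ j ∈ q.carrier, x j) := by
  have hexp : Real.exp (q.entropy + q.mean fun j => Real.log (x j)) =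
      ∏ j ∈ q.carrier, (x j / q.weight j) ^ q.weight j := by
    rw [entropy, mean, ← Finset.sum_add_distrib, Real.exp_sum]
    refine Finset.prod_congr rfl fun j hj => ?_
    rcases (q.weight_nonneg j hj).eq_or_lt with hpj | hpj
    · simp [← hpj]
    · rw [Real.rpow_def_of_pos (div_pos (hx j hj) hpj), Real.log_div (hx j hj).ne' hpj.ne',
        Real.negMulLog]
      ring_nf
  have hamgm : ∏ j ∈ q.carrier, (x j / q.weight j) ^ q.weight j ≤ ∑ j ∈ q.carrier, x j :=
    calc ∏ j ∈ q.carrier, (x j / q.weight j) ^ q.weight j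
        ≤ ∑ j ∈ q.carrier, q.weight j * (x j / q.weight j) :=
          Real.geom_mean_le_arith_mean_weighted _ _ _ q.weight_nonneg q.sum_weight
            fun j hj => div_nonneg (hx j hj).le (q.weight_nonneg j hj)
      _ ≤ ∑ j ∈ q.carrier, x j := Finset.sum_le_sum fun j hj => by
          rcases (q.weight_nonneg j hj).eq_or_lt with hpj | hpj
          · simp [← hpj, (hx j hj).le]
          · rw [mul_div_cancel₀ _ hpj.ne']
  rw [← hexp] at hamgm
  exact (Real.le_log_iff_exp_le ((Real.exp_pos _).trans_le hamgm)).2 hamgm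

lemma entropy_add_mean_log_gibbs (F : Finset ι) {x : ι → ℝ} (hx : ∀ j ∈ F, 0 < x j)
    (hF : F.Nonempty) :
    (gibbs F x hx hF).entropy + (gibbs F x hx hF).mean (fun j => Real.log (x j)) =
      Real.log (∑ j ∈ F, x j) := by
  have hZ : 0 < ∑ j ∈ F, x j := Finset.sum_pos hx hF
  have hterm : ∀ j ∈ F, Real.negMulLog (x j / ∑ i ∈ F, x i) + x j / (∑ i ∈ F, x i) * Real.log (x j)
      = x j / (∑ i ∈ F, x i) * Real.log (∑ i ∈ F, x i) := fun j hj => by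
    rw [Real.negMulLog, Real.log_div (hx j hj).ne' hZ.ne']
    ring
  rw [entropy, mean, ← Finset.sum_add_distrib]
  simp only [gibbs]
  rw [Finset.sum_congr rfl hterm, ← Finset.sum_mul, ← Finset.sum_div, div_self hZ.ne', one_mul]

lemma entropy_sub_log_le_mul_mean (q : FinDistrib ι) {a : ι → ℝ} (ha : ∀ j ∈ q.carrier, 0 < a j)
    {c α : ℝ} (hsum : ∑ j ∈ q.carrier, a j ^ α ≤ c) :
    q.entropy - Real.log c ≤ α * q.mean fun j => Real.log (1 / a j) := by
  have hx : ∀ j ∈ q.carrier, 0 < a j ^ α := fun j hj => Real.rpow_pos_of_pos (ha j hj) α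
  have hgibbs := q.entropy_add_mean_log_le hx
  have hZ : 0 < ∑ j ∈ q.carrier, a j ^ α :=
    Finset.sum_pos hx (Finset.nonempty_of_sum_ne_zero (q.sum_weight ▸ one_ne_zero))
  rw [q.mean_log_rpow ha] at hgibbs
  linarith [Real.log_le_log hZ hsum]

end FinDistrib

section CriticalExponent

variable {ι : Type*} {a : ι → ℝ} {c : ℝ}

noncomputable def criticalExponent (a : ι → ℝ) (c : ℝ) : ℝ≥0∞ :=
  sInf ((fun α : ℝ => ENNReal.ofReal α) ''
    {α : ℝ | 0 < α ∧ ∑' j, ENNReal.ofReal (a j ^ α) ≤ ENNReal.ofReal c})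

lemma tsum_ofReal_le_ofReal_iff {f : ι → ℝ} (hf : ∀ j, 0 ≤ f j) (hc : 0 ≤ c) :
    ∑' j, ENNReal.ofReal (f j) ≤ ENNReal.ofReal c ↔ ∀ F : Finset ι, ∑ j ∈ F, f j ≤ c := by
  rw [ENNReal.tsum_eq_iSup_sum, iSup_le_iff]
  refine forall_congr' fun F => ?_
  rw [← ENNReal.ofReal_sum_of_nonneg fun j _ => hf j, ENNReal.ofReal_le_ofReal_iff hc]

lemma criticalExponent_le_ofReal (ha : ∀ j, 0 ≤ a j) (hc : 0 ≤ c) {α : ℝ} (hα : 0 < α)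
    (hsum : ∀ F : Finset ι, ∑ j ∈ F, a j ^ α ≤ c) : criticalExponent a c ≤ ENNReal.ofReal α :=
  sInf_le ⟨α, ⟨hα, (tsum_ofReal_le_ofReal_iff (fun j => Real.rpow_nonneg (ha j) α) hc).2 hsum⟩, rfl⟩

lemma le_criticalExponent (ha : ∀ j, 0 ≤ a j) (hc : 0 ≤ c) {b : ℝ≥0∞}
    (h : ∀ α, 0 < α → (∀ F : Finset ι, ∑ j ∈ F, a j ^ α ≤ c) → b ≤ ENNReal.ofReal α) :
    b ≤ criticalExponent a c := by
  refine le_sInf ?_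
  rintro _ ⟨α, ⟨hα, hsum⟩, rfl⟩
  exact h α hα ((tsum_ofReal_le_ofReal_iff (fun j => Real.rpow_nonneg (ha j) α) hc).1 hsum)

lemma criticalExponent_eq_zero (ha : ∀ j, a j ∈ Icc 0 1)
    (hcard : ∀ F : Finset ι, (F.card : ℝ) ≤ c) : criticalExponent a c = 0 := by
  have hc : 0 ≤ c := by simpa using hcard ∅
  refine le_antisymm (ENNReal.le_of_forall_pos_le_add fun ε hε _ => ?_) bot_le
  rw [zero_add, ← ENNReal.ofReal_coe_nnreal]
  refine criticalExponent_le_ofReal (fun j => (ha j).1) hc (by exact_mod_cast hε) fun F => ?_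
  calc ∑ j ∈ F, a j ^ (ε : ℝ) ≤ ∑ _j ∈ F, (1 : ℝ) :=
        Finset.sum_le_sum fun j _ => Real.rpow_le_one (ha j).1 (ha j).2 ε.coe_nonneg
    _ = F.card := by simp
    _ ≤ c := hcard F

lemma ofReal_div_le_criticalExponent (ha : ∀ j, a j ∈ Ioo 0 1) (hc : 0 < c) (q : FinDistrib ι) :
    ENNReal.ofReal ((q.entropy - Real.log c) / q.mean fun j => Real.log (1 / a j))
      ≤ criticalExponent a c := by
  have hmean := q.mean_pos fun j _ => Real.log_pos (one_lt_one_div (ha j).1 (ha j).2)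
  refine le_criticalExponent (fun j => (ha j).1.le) hc.le fun α _ hsum => ?_
  refine ENNReal.ofReal_le_ofReal ((div_le_iff₀ hmean).2 ?_)
  exact q.entropy_sub_log_le_mul_mean (fun j _ => (ha j).1) (hsum q.carrier)

lemma criticalExponent_pos (ha : ∀ j, a j ∈ Ioo 0 1) (hc : 0 < c) {q : FinDistrib ι}
    (hq : Real.log c < q.entropy) : 0 < criticalExponent a c := by
  have hmean := q.mean_pos fun j _ => Real.log_pos (one_lt_one_div (ha j).1 (ha j).2)
  exact (ENNReal.ofReal_pos.2 (div_pos (sub_pos.2 hq) hmean)).trans_le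
    (ofReal_div_le_criticalExponent ha hc q)

lemma inv_criticalExponent_toReal_le (ha : ∀ j, a j ∈ Ioo 0 1) (hc : 0 < c) {q : FinDistrib ι}
    (hq : Real.log c < q.entropy) :
    (criticalExponent a c)⁻¹.toReal ≤
      (q.mean fun j => Real.log (1 / a j)) / (q.entropy - Real.log c) := by
  have hmean := q.mean_pos fun j _ => Real.log_pos (one_lt_one_div (ha j).1 (ha j).2)
  have hK := sub_pos.2 hq
  have h := ENNReal.inv_le_inv.2 (ofReal_div_le_criticalExponent ha hc q)
  rw [← ENNReal.ofReal_inv_of_pos (div_pos hK hmean), inv_div] at h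
  exact (ENNReal.toReal_mono ENNReal.ofReal_ne_top h).trans_eq
    (ENNReal.toReal_ofReal (div_pos hmean hK).le)

lemma exists_lt_of_inv_criticalExponent_toReal_lt (ha : ∀ j, a j ∈ Ioo 0 1) (hc : 0 < c)
    (hS : 0 < criticalExponent a c) {x : ℝ} (hx : (criticalExponent a c)⁻¹.toReal < x) :
    ∃ q : FinDistrib ι, Real.log c < q.entropy ∧
      (q.mean fun j => Real.log (1 / a j)) / (q.entropy - Real.log c) < x := by
  have hx0 : 0 < x := ENNReal.toReal_nonneg.trans_lt hx
  obtain ⟨F, hF⟩ : ∃ F : Finset ι, c < ∑ j ∈ F, a j ^ x⁻¹ := by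
    by_contra! h
    have hle := ENNReal.inv_le_inv.2
      (criticalExponent_le_ofReal (fun j => (ha j).1.le) hc.le (inv_pos.2 hx0) h)
    rw [ENNReal.ofReal_inv_of_pos hx0, inv_inv] at hle
    have hx_le := ENNReal.toReal_mono (ENNReal.inv_ne_top.2 hS.ne') hle
    rw [ENNReal.toReal_ofReal hx0.le] at hx_le
    linarith
  have hZ : 0 < ∑ j ∈ F, a j ^ x⁻¹ := hc.trans hF
  -- the Gibbs distribution of `a ^ x⁻¹` on `F` attains equality in Gibbs' inequality
  let q := FinDistrib.gibbs F (fun j => a j ^ x⁻¹) (fun j _ => Real.rpow_pos_of_pos (ha j).1 _)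
    (Finset.nonempty_of_sum_ne_zero hZ.ne')
  have hgibbs := FinDistrib.entropy_add_mean_log_gibbs F
    (fun j _ => Real.rpow_pos_of_pos (ha j).1 x⁻¹) (Finset.nonempty_of_sum_ne_zero hZ.ne')
  rw [FinDistrib.mean_log_rpow _ (fun j _ => (ha j).1)] at hgibbs
  have hmean := q.mean_pos fun j _ => Real.log_pos (one_lt_one_div (ha j).1 (ha j).2)
  have hlog := Real.log_lt_log hc hF
  have hK : x⁻¹ * (q.mean fun j => Real.log (1 / a j)) < q.entropy - Real.log c := by linarith
  have hK₀ : 0 < x⁻¹ * q.mean fun j => Real.log (1 / a j) := mul_pos (inv_pos.2 hx0) hmean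
  refine ⟨q, by linarith, (div_lt_iff₀ (by linarith)).2 ?_⟩
  calc (q.mean fun j => Real.log (1 / a j))
      = x * (x⁻¹ * q.mean fun j => Real.log (1 / a j)) := by field_simp
    _ < x * (q.entropy - Real.log c) := by gcongr

lemma isGLB_inv_criticalExponent_toReal (ha : ∀ j, a j ∈ Ioo 0 1) (hc : 0 < c) {q₀ : FinDistrib ι}
    (hq₀ : Real.log c < q₀.entropy) :
    IsGLB (range fun q : {q : FinDistrib ι // Real.log c < q.entropy} =>
        (q.1.mean fun j => Real.log (1 / a j)) / (q.1.entropy - Real.log c))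
      (criticalExponent a c)⁻¹.toReal := by
  refine ⟨?_, fun b hb => le_of_forall_gt_imp_ge_of_dense fun x hx => ?_⟩
  · rintro _ ⟨⟨q, hq⟩, rfl⟩
    exact inv_criticalExponent_toReal_le ha hc hq
  · obtain ⟨q, hq, hlt⟩ :=
      exists_lt_of_inv_criticalExponent_toReal_lt ha hc (criticalExponent_pos ha hc hq₀) hx
    exact (hb ⟨⟨q, hq⟩, rfl⟩).trans hlt.le

end CriticalExponent

theorem infHarmonic_implicit_function_general {ι : Type*}
    (D : Set ℂ) (hD : IsOpen D)
    (a : ι → ℂ → ℝ) (ha : ∀ j, ∀ z ∈ D, a j z ∈ Set.Ioo (0:ℝ) 1)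
    (hlog : ∀ j, InfHarmonicOn (fun z => Real.log (1 / a j z)) D)
    (c : ℝ) (hc : 0 < c)
    (s : ℂ → ℝ≥0∞)
    (hs : ∀ z ∈ D, s z = sInf ((fun α : ℝ => ENNReal.ofReal α) ''
        {α : ℝ | 0 < α ∧ ∑' j, ENNReal.ofReal (a j z ^ α) ≤ ENNReal.ofReal c})) :
    (∀ z ∈ D, s z = 0) ∨ InfHarmonicOn (fun z => ((s z)⁻¹).toReal) D := by
  by_cases hF : ∃ F : Finset ι, c < F.card
  · right
    obtain ⟨F, hF⟩ := hF
    have hFne : F.Nonempty := Finset.card_pos.1 (by exact_mod_cast hc.trans hF)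
    have hq₀ : Real.log c < (FinDistrib.uniform F hFne).entropy := by
      rw [FinDistrib.entropy_uniform]
      exact Real.log_lt_log hc hF
    have : Nonempty {q : FinDistrib ι // Real.log c < q.entropy} := ⟨⟨_, hq₀⟩⟩
    refine InfHarmonicOn.of_isGLB_range (v := fun (q : {q : FinDistrib ι // Real.log c < q.entropy})
      z => (q.1.mean fun j => Real.log (1 / a j z)) / (q.1.entropy - Real.log c))
      (fun q => ?_) fun z hz => ?_
    · exact (InfHarmonicOn.finset_sum hD _ fun j hj =>
        (hlog j).const_mul (q.1.weight_nonneg j hj)).div_const (sub_pos.2 q.2).le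
    · rw [hs z hz]
      exact isGLB_inv_criticalExponent_toReal (fun j => ha j z hz) hc hq₀
  · left
    simp only [not_exists, not_lt] at hF
    intro z hz
    rw [hs z hz]
    exact criticalExponent_eq_zero (fun j => Ioo_subset_Icc_self (ha j z hz)) hF

theorem infHarmonic_implicit_function {ι : Type*} [Countable ι]
    (D : Set ℂ) (hD : IsOpen D) (hDc : IsConnected D)
    (a : ι → ℂ → ℝ) (ha : ∀ j, ∀ z ∈ D, a j z ∈ Set.Ioo (0:ℝ) 1)
    (hlog : ∀ j, InfHarmonicOn (fun z => Real.log (1 / a j z)) D)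
    (c : ℝ) (hc : 0 < c)
    (s : ℂ → ℝ≥0∞)
    (hs : ∀ z ∈ D, s z = sInf ((fun α : ℝ => ENNReal.ofReal α) ''
        {α : ℝ | 0 < α ∧ ∑' j, ENNReal.ofReal (a j z ^ α) ≤ ENNReal.ofReal c})) :
    (∀ z ∈ D, s z = 0) ∨ InfHarmonicOn (fun z => ((s z)⁻¹).toReal) D :=
  infHarmonic_implicit_function_general D hD a ha hlog c hc s hs
end

section
/- Let D ⊆ ℂ be a domain, let a₁,…,a_n : D → (0,1) be functions with log(1/a_j) inf-harmonic on D for each j, and let c ∈ (0,n). For each λ ∈ D let s(λ) be the unique solution of ∑_{j=1}^n a_j(λ)^{s(λ)} = c. Then 1/s is an inf-harmonic function on D. -/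
open Complex Metric Set Filter
open scoped ENNReal

lemma harm_comb {n : ℕ} (hn : 0 < n) {D : Set ℂ}
    (h : Fin n → ℂ → ℝ) (hh : ∀ j, HarmonicOnSet (h j) D) (r : Fin n → ℝ) :
    HarmonicOnSet (fun z => ∑ j, r j * h j z) D := by
  intro z hz
  choose ε hε hsub F hF hFre using fun j => hh j z hz
  have hne : Nonempty (Fin n) := Fin.pos_iff_nonempty.mp hn
  set ε0 := Finset.univ.inf' Finset.univ_nonempty ε with hε0
  have hε0pos : 0 < ε0 := by
    rw [hε0, Finset.lt_inf'_iff]; exact fun j _ => hε j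
  have hball : ∀ j, Metric.ball z ε0 ⊆ Metric.ball z (ε j) :=
    fun j => Metric.ball_subset_ball (Finset.inf'_le _ (Finset.mem_univ j))
  refine ⟨ε0, hε0pos, (hball (Classical.arbitrary _)).trans (hsub _),
    fun w => ∑ j, (r j : ℂ) * F j w, ?_, ?_⟩
  · exact DifferentiableOn.fun_sum fun j _ => ((hF j).mono (hball j)).const_mul _
  · intro w hw
    rw [Complex.re_sum]
    exact Finset.sum_congr rfl fun j _ => by
      rw [Complex.re_ofReal_mul, hFre j w (hball j hw)]

lemma gibbs_term {p q : ℝ} (hp : 0 ≤ p) (hq : 0 < q) :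
    p - q ≤ p * (Real.log p - Real.log q) := by
  rcases hp.eq_or_lt with h | h
  · simp [← h]; linarith
  · have h1 : Real.log (q / p) ≤ q / p - 1 := Real.log_le_sub_one_of_pos (div_pos hq h)
    rw [Real.log_div hq.ne' h.ne'] at h1
    have h2 := mul_le_mul_of_nonneg_left h1 h.le
    have h3 : p * (q / p - 1) = q - p := by field_simp
    nlinarith

theorem infHarmonic_similarity_dimension (D : Set ℂ) (hD : IsOpen D)
    (hDc : IsConnected D) (n : ℕ) (hn : 0 < n)
    (a : Fin n → ℂ → ℝ) (ha : ∀ j, ∀ z ∈ D, a j z ∈ Set.Ioo (0:ℝ) 1)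
    (hlog : ∀ j, InfHarmonicOn (fun z => Real.log (1 / a j z)) D)
    (c : ℝ) (hc : 0 < c) (hcn : c < n)
    (s : ℂ → ℝ) (hs : ∀ z ∈ D, ∑ j, a j z ^ s z = c) :
    InfHarmonicOn (fun z => 1 / s z) D := by
  classical
  have hneFin : Nonempty (Fin n) := Fin.pos_iff_nonempty.mp hn
  simp only [InfHarmonicOn] at hlog
  choose Hf hne hharm hpos hinf using hlog
  set Lc := Real.log c with hLc
  set ent : (Fin n → ℝ) → ℝ := fun p => -∑ j, p j * Real.log (p j) with hent
  set 𝓕 : Set (ℂ → ℝ) := {g | ∃ p : Fin n → ℝ, (∀ j, 0 ≤ p j) ∧ (∑ j, p j = 1) ∧ Lc < ent p ∧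
      ∃ h : Fin n → ℂ → ℝ, (∀ j, h j ∈ Hf j) ∧
      g = fun z => ∑ j, (p j / (ent p - Lc)) * h j z} with hFdef
  have hnR : (0:ℝ) < n := Nat.cast_pos.mpr hn
  have hu_ent : ent (fun _ : Fin n => (n:ℝ)⁻¹) = Real.log n := by
    simp only [hent, Finset.sum_const, Finset.card_univ, Fintype.card_fin, nsmul_eq_mul,
      Real.log_inv]
    field_simp
  have hFne : 𝓕.Nonempty := by
    refine ⟨_, ⟨fun _ => (n:ℝ)⁻¹, fun j => by positivity, ?_, ?_,
      fun j => (hne j).some, fun j => (hne j).some_mem, rfl⟩⟩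
    · simp only [Finset.sum_const, Finset.card_univ, Fintype.card_fin, nsmul_eq_mul]
      field_simp
    · rw [hu_ent]; exact Real.log_lt_log hc hcn
  have hFharm : ∀ g ∈ 𝓕, HarmonicOnSet g D := by
    rintro g ⟨p, -, -, -, h, hh, rfl⟩
    exact harm_comb hn h (fun j => hharm j _ (hh j)) _
  have hFnonneg : ∀ g ∈ 𝓕, ∀ z ∈ D, 0 ≤ g z := by
    rintro g ⟨p, hp0, -, hpent, h, hh, rfl⟩ z hz
    refine Finset.sum_nonneg fun j _ => mul_nonneg (div_nonneg (hp0 j) ?_) (hpos j _ (hh j) z hz)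
    linarith
  refine ⟨𝓕, hFne, hFharm, hFnonneg, ?_⟩
  intro z hz
  have haz : ∀ j, 0 < a j z ∧ a j z < 1 := fun j => ⟨(ha j z hz).1, (ha j z hz).2⟩
  set B : Fin n → ℝ := fun j => Real.log (1 / a j z) with hB
  have hBeq : ∀ j, B j = -Real.log (a j z) := fun j => by
    simp only [hB, one_div, Real.log_inv]
  have hBpos : ∀ j, 0 < B j := fun j => by
    rw [hBeq]; exact neg_pos.mpr (Real.log_neg (haz j).1 (haz j).2)
  have hsz : 0 < s z := by
    by_contra hcon
    push_neg at hcon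
    have h1 : ∀ j : Fin n, (1:ℝ) ≤ a j z ^ s z := fun j =>
      Real.one_le_rpow_of_pos_of_le_one_of_nonpos (haz j).1 (haz j).2.le hcon
    have h2 : (n:ℝ) ≤ c := by
      rw [← hs z hz]
      calc (n:ℝ) = ∑ _j : Fin n, (1:ℝ) := by simp
      _ ≤ _ := Finset.sum_le_sum fun j _ => h1 j
    linarith
  set q : Fin n → ℝ := fun j => a j z ^ s z / c with hq
  have hq0 : ∀ j, 0 < q j := fun j => div_pos (Real.rpow_pos_of_pos (haz j).1 _) hc
  have hqsum : ∑ j, q j = 1 := by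
    rw [hq, ← Finset.sum_div, hs z hz, div_self hc.ne']
  have hlogq : ∀ j, Real.log (q j) = -(s z * B j) - Lc := fun j => by
    rw [hq]
    rw [Real.log_div (Real.rpow_pos_of_pos (haz j).1 _).ne' hc.ne',
      Real.log_rpow (haz j).1, hBeq, hLc]; ring
  have key : ∀ p : Fin n → ℝ, (∀ j, 0 ≤ p j) → (∑ j, p j = 1) →
      ent p - Lc ≤ s z * ∑ j, p j * B j := by
    intro p hp0 hp1
    have h1 : ∀ j : Fin n, p j - q j ≤ p j * (Real.log (p j) - Real.log (q j)) :=
      fun j => gibbs_term (hp0 j) (hq0 j)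
    have h2 : (0:ℝ) ≤ ∑ j, p j * (Real.log (p j) - Real.log (q j)) := by
      have := Finset.sum_le_sum (fun j (_ : j ∈ Finset.univ) => h1 j)
      simpa [Finset.sum_sub_distrib, hp1, hqsum] using this
    have h3 : ∑ j, p j * (Real.log (p j) - Real.log (q j))
        = (∑ j, p j * Real.log (p j)) + s z * (∑ j, p j * B j) + Lc := by
      have hterm : ∀ j : Fin n, p j * (Real.log (p j) - Real.log (q j))
          = p j * Real.log (p j) + s z * (p j * B j) + Lc * p j := fun j => by
        rw [hlogq j]; ring
      rw [Finset.sum_congr rfl (fun j _ => hterm j), Finset.sum_add_distrib,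
        Finset.sum_add_distrib, ← Finset.mul_sum, ← Finset.mul_sum, hp1, mul_one]
    have h4 : ent p = -∑ j, p j * Real.log (p j) := rfl
    linarith [h2, h3]
  have heqq : ent q - Lc = s z * ∑ j, q j * B j := by
    have hterm : ∀ j : Fin n, q j * Real.log (q j)
        = -(s z * (q j * B j)) - Lc * q j := fun j => by
      rw [hlogq j]; ring
    have hs1 : ∑ j, q j * Real.log (q j) = -(s z * ∑ j, q j * B j) - Lc := by
      rw [Finset.sum_congr rfl (fun j _ => hterm j), Finset.sum_sub_distrib,
        ← Finset.mul_sum, hqsum, mul_one, Finset.sum_neg_distrib, ← Finset.mul_sum]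
    have h4 : ent q = -∑ j, q j * Real.log (q j) := rfl
    rw [h4, hs1]; ring
  have hSqpos : 0 < ∑ j, q j * B j :=
    Finset.sum_pos (fun j _ => mul_pos (hq0 j) (hBpos j)) Finset.univ_nonempty
  have hdenq : 0 < ent q - Lc := by rw [heqq]; exact mul_pos hsz hSqpos
  have hSdiv : (∑ j, q j * B j) / (ent q - Lc) = 1 / s z := by
    rw [heqq, div_eq_div_iff (mul_pos hsz hSqpos).ne' hsz.ne']
    ring
  have hbdd : BddBelow ((fun h => h z) '' 𝓕) := by
    refine ⟨0, ?_⟩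
    rintro x ⟨g, hg, rfl⟩
    exact hFnonneg g hg z hz
  have hlow : ∀ g ∈ 𝓕, 1 / s z ≤ g z := by
    rintro g ⟨p, hp0, hp1, hpent, h, hh, rfl⟩
    have hden : 0 < ent p - Lc := sub_pos.mpr hpent
    have hhB : ∀ j, B j ≤ h j z := by
      intro j
      have hi := hinf j z hz
      rw [hB]
      simp only
      rw [hi]
      exact csInf_le ⟨0, by rintro x ⟨h', hh', rfl⟩; exact hpos j h' hh' z hz⟩
        ⟨h j, hh j, rfl⟩
    have h1 : (∑ j, p j * B j) / (ent p - Lc) ≤ ∑ j, (p j / (ent p - Lc)) * h j z := by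
      rw [Finset.sum_div]
      refine Finset.sum_le_sum fun j _ => ?_
      rw [mul_div_right_comm]
      exact mul_le_mul_of_nonneg_left (hhB j) (div_nonneg (hp0 j) hden.le)
    have h2 : 1 / s z ≤ (∑ j, p j * B j) / (ent p - Lc) := by
      rw [div_le_div_iff₀ hsz hden]
      calc 1 * (ent p - Lc) = ent p - Lc := one_mul _
      _ ≤ s z * ∑ j, p j * B j := key p hp0 hp1
      _ = (∑ j, p j * B j) * s z := mul_comm _ _
    exact h2.trans h1
  have hub : ∀ ε > 0, sInf ((fun h => h z) '' 𝓕) ≤ 1 / s z + ε := by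
    intro ε hε
    set δ := ε * (ent q - Lc) with hδ
    have hδ0 : 0 < δ := mul_pos hε hdenq
    have hchoice : ∀ j, ∃ x ∈ ((fun h => h z) '' Hf j), x < B j + δ := by
      intro j
      apply exists_lt_of_csInf_lt ((hne j).image _)
      have hi := hinf j z hz
      rw [← hi, hB]
      simp only
      linarith
    have hchoice' : ∀ j, ∃ h ∈ Hf j, h z < B j + δ := by
      intro j
      obtain ⟨x, ⟨h, hh, rfl⟩, hx⟩ := hchoice j
      exact ⟨h, hh, hx⟩
    choose h hhf hhlt using hchoice'
    have hmem : (fun w => ∑ j, (q j / (ent q - Lc)) * h j w) ∈ 𝓕 :=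
      ⟨q, fun j => (hq0 j).le, hqsum, sub_pos.mp hdenq, h, hhf, rfl⟩
    have hval : (∑ j, (q j / (ent q - Lc)) * h j z) ≤ 1 / s z + ε := by
      calc ∑ j, (q j / (ent q - Lc)) * h j z
          ≤ ∑ j, (q j / (ent q - Lc)) * (B j + δ) :=
            Finset.sum_le_sum fun j _ => mul_le_mul_of_nonneg_left (hhlt j).le
              (div_nonneg (hq0 j).le hdenq.le)
      _ = (∑ j, q j * B j) / (ent q - Lc) + ε * ∑ j, q j := by
          rw [Finset.sum_div, Finset.mul_sum, ← Finset.sum_add_distrib]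
          refine Finset.sum_congr rfl fun j _ => ?_
          rw [hδ]
          field_simp
      _ = 1 / s z + ε := by rw [hSdiv, hqsum, mul_one]
    exact le_trans (csInf_le hbdd ⟨_, hmem, rfl⟩) hval
  show 1 / s z = _
  refine le_antisymm (le_csInf (hFne.image _) ?_) (le_of_forall_pos_le_add hub)
  rintro x ⟨g, hg, rfl⟩
  exact hlow g hg
end
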